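/- arXiv:2408.03719 — 3 statements merged into one kernel-verified Lean document; each statement's English description precedes it below -/
import Mathlib

section
/- We have 𝒩₀ = {(∅, A) : A ⊆ E and ₋ₐM is acyclic} and 𝒩_m = {(N, ∅) : N is an NBC subset of M̲}, and the composition ψ = ψ_m ∘ ψ_{m−1} ∘ ⋯ ∘ ψ₁ is a bijection from 𝒩₀ onto 𝒩_m; consequently the map sending A to the unique N with ψ(∅, A) = (N, ∅) is a bijection from {A ⊆ E : ₋ₐM acyclic} onto the set of NBC subsets of M̲. -/
open Finset

/-- The support of a signed subset `X = (X⁺, X⁻)`. -/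
def supp {α : Type} [DecidableEq α] (X : Finset α × Finset α) : Finset α := X.1 ∪ X.2

/-- An oriented matroid on ground set `α`, given by its collection of signed circuits,
satisfying the signed circuit axioms (C1)-(C4). -/
structure OM (α : Type) [DecidableEq α] where
  C : Set (Finset α × Finset α)
  disj : ∀ X ∈ C, Disjoint X.1 X.2
  not_empty_mem : ((∅ : Finset α), (∅ : Finset α)) ∉ C
  neg_mem : ∀ X ∈ C, (X.2, X.1) ∈ C
  incomp : ∀ X ∈ C, ∀ Y ∈ C, supp X ⊆ supp Y → X = Y ∨ X = (Y.2, Y.1)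
  elimAx : ∀ X ∈ C, ∀ Y ∈ C, X ≠ Y → X ≠ (Y.2, Y.1) → ∀ e ∈ X.1 ∩ Y.2,
    ∃ Z ∈ C, Z.1 ⊆ (X.1 ∪ Y.1).erase e ∧ Z.2 ⊆ (X.2 ∪ Y.2).erase e

/-- A collection of signed subsets is acyclic if it contains no positive member. -/
def Acyclic {α : Type} (C : Set (Finset α × Finset α)) : Prop :=
  ∀ X ∈ C, X.2 ≠ ∅

/-- Reorientation of a signed subset by `A`. -/
def reorient {α : Type} [DecidableEq α] (A : Finset α) (X : Finset α × Finset α) :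
    Finset α × Finset α :=
  ((X.1 \ A) ∪ (X.2 ∩ A), (X.2 \ A) ∪ (X.1 ∩ A))

/-- Reorientation of a collection of signed subsets by `A`. -/
def reorientC {α : Type} [DecidableEq α] (A : Finset α)
    (C : Set (Finset α × Finset α)) : Set (Finset α × Finset α) :=
  reorient A '' C

/-- Deletion: keep the members whose support avoids `D`. -/
def delC {α : Type} [DecidableEq α] (D : Finset α)
    (C : Set (Finset α × Finset α)) : Set (Finset α × Finset α) :=
  {X ∈ C | Disjoint (supp X) D}

/-- The pre-circuits of the contraction by `T`. -/
def contrPre {α : Type} [DecidableEq α] (T : Finset α)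
    (C : Set (Finset α × Finset α)) : Set (Finset α × Finset α) :=
  {Z | ∃ Y ∈ C, supp Y \ T ≠ ∅ ∧ Z = (Y.1 \ T, Y.2 \ T)}

/-- Contraction: the support-inclusion-minimal members of `contrPre T C`. -/
def contrC {α : Type} [DecidableEq α] (T : Finset α)
    (C : Set (Finset α × Finset α)) : Set (Finset α × Finset α) :=
  {Z ∈ contrPre T C | ∀ W ∈ contrPre T C, supp W ⊆ supp Z → supp W = supp Z}

/-- `N` is an NBC subset of the underlying matroid of `M`: it contains no
broken circuit, i.e. no circuit of the underlying matroid with its maximal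
element deleted. -/
def IsNBC {α : Type} [DecidableEq α] [LinearOrder α] (M : OM α) (N : Finset α) : Prop :=
  ∀ X ∈ M.C, ∀ h : (supp X).Nonempty, ¬ (supp X).erase ((supp X).max' h) ⊆ N

/-- `E_k = {e₁, …, e_k}`: the first `k` elements of the ground set `Fin m`. -/
def Ek (m k : ℕ) : Finset (Fin m) := Finset.filter (fun i => (i : ℕ) < k) Finset.univ

/-- `M` is loopless: no signed circuit has support of size one. -/
def Loopless {m : ℕ} (M : OM (Fin m)) : Prop := ∀ X ∈ M.C, (supp X).card ≠ 1

/-- `M(N, A) = ₋ₐ(M ∖ (E_k − N) / N)`. -/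
def MNA {m : ℕ} (M : OM (Fin m)) (k : ℕ) (N A : Finset (Fin m)) :
    Set (Finset (Fin m) × Finset (Fin m)) :=
  reorientC A (contrC N (delC (Ek m k \ N) M.C))

/-- The set `𝒩_k` of pairs `(N, A)` with `N ⊆ E_k` an NBC subset of the underlying
matroid, `A ⊆ E − E_k`, and `M(N, A)` acyclic. -/
def NFam {m : ℕ} (M : OM (Fin m)) (k : ℕ) : Set (Finset (Fin m) × Finset (Fin m)) :=
  {p | p.1 ⊆ Ek m k ∧ IsNBC M p.1 ∧ p.2 ⊆ (Ek m k)ᶜ ∧ Acyclic (MNA M k p.1 p.2)}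

open scoped Classical in
/-- The map `ψ_k` (where `j = k - 1` and `e = e_k`), defined on `𝒩_{k-1}`:
`ψ_k(N, A) = (N ∪ {e_k}, A)` if `e_k ∉ A` and `₋{e_k}M(N, A)` is acyclic,
`ψ_k(N, A) = (N, A)` if `e_k ∉ A` and `₋{e_k}M(N, A)` is not acyclic, and
`ψ_k(N, A) = (N, A − {e_k})` if `e_k ∈ A`. -/
noncomputable def psi {m : ℕ} (M : OM (Fin m)) (j : ℕ) (e : Fin m)
    (p : Finset (Fin m) × Finset (Fin m)) : Finset (Fin m) × Finset (Fin m) :=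
  if e ∈ p.2 then (p.1, p.2.erase e)
  else if Acyclic (reorientC {e} (MNA M j p.1 p.2)) then (insert e p.1, p.2)
  else p

/-- The composition `ψ_k ∘ ψ_{k-1} ∘ ⋯ ∘ ψ₁`. -/
noncomputable def psiIter {m : ℕ} (M : OM (Fin m)) :
    ℕ → (Finset (Fin m) × Finset (Fin m)) → Finset (Fin m) × Finset (Fin m)
  | 0, p => p
  | (j + 1), p => if h : j < m then psi M j ⟨j, h⟩ (psiIter M j p) else psiIter M j p


/-!
Write `S = E − E_k`. For an NBC set `N ⊆ E_k`, `M(N, A)` has a positive circuit iff some circuit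
of `M` inside `N ∪ S` meets `S` and has no negative element in `S` after reorienting `A`: one
with minimal trace on `S` is, by circuit elimination, support-minimal in the contraction by `N`.

In these terms `ψ_k` is inverted explicitly: remove `e_k` from `N` if it is there, otherwise add
it back to `A` unless `₋(A ∪ {e_k})` already has such a circuit. The two facts that make this
work are that `N ∪ {e_k}` stays NBC (a broken circuit through `e_k` would give a positive circuit
for `A` or for `A ∪ {e_k}`), and that positive circuits for `A` and for `A ∪ {e_k}` can be
eliminated at `e_k`. Composing the `m` steps and reading off `E_0 = ∅` and `E − E_m = ∅` gives
the theorem.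
-/

lemma Set.BijOn.fst_of_slices {α β γ δ : Type*} {f : α × β → γ × δ} {a₀ : α} {d₀ : δ}
    {s : Set β} {t : Set γ} (h : Set.BijOn f {p | p.1 = a₀ ∧ p.2 ∈ s} {q | q.1 ∈ t ∧ q.2 = d₀}) :
    Set.BijOn (fun b => (f (a₀, b)).1) s t := by
  have mem : ∀ b ∈ s, ((a₀, b) : α × β) ∈ {p : α × β | p.1 = a₀ ∧ p.2 ∈ s} :=
    fun b hb => ⟨rfl, hb⟩
  refine ⟨fun b hb => (h.mapsTo (mem b hb)).1, fun b₁ hb₁ b₂ hb₂ heq => ?_, fun c hc => ?_⟩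
  · have h₁ := (h.mapsTo (mem b₁ hb₁)).2
    have h₂ := (h.mapsTo (mem b₂ hb₂)).2
    exact congrArg Prod.snd
      (h.injOn (mem b₁ hb₁) (mem b₂ hb₂) (Prod.ext heq (h₁.trans h₂.symm)))
  · obtain ⟨⟨a, b⟩, ⟨rfl, hb⟩, hfb⟩ :=
      h.surjOn (show ((c, d₀) : γ × δ) ∈ {q : γ × δ | q.1 ∈ t ∧ q.2 = d₀} from ⟨hc, rfl⟩)
    exact ⟨b, hb, by simp [hfb]⟩


section Reorientation
variable {α : Type} [DecidableEq α]

@[simp] lemma mem_supp {a : α} {X : Finset α × Finset α} : a ∈ supp X ↔ a ∈ X.1 ∨ a ∈ X.2 :=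
  mem_union

@[simp] lemma mem_reorient_fst {a : α} {B : Finset α} {X : Finset α × Finset α} :
    a ∈ (reorient B X).1 ↔ a ∈ X.1 ∧ a ∉ B ∨ a ∈ X.2 ∧ a ∈ B := by
  simp [reorient]

@[simp] lemma mem_reorient_snd {a : α} {B : Finset α} {X : Finset α × Finset α} :
    a ∈ (reorient B X).2 ↔ a ∈ X.2 ∧ a ∉ B ∨ a ∈ X.1 ∧ a ∈ B := by
  simp [reorient]

lemma supp_swap (X : Finset α × Finset α) : supp (X.2, X.1) = supp X :=
  union_comm _ _

@[simp] lemma supp_reorient (B : Finset α) (X : Finset α × Finset α) :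
    supp (reorient B X) = supp X := by
  ext a; simp only [mem_supp, mem_reorient_fst, mem_reorient_snd]; tauto

lemma reorient_swap (B : Finset α) (X : Finset α × Finset α) :
    reorient B (X.2, X.1) = ((reorient B X).2, (reorient B X).1) := rfl

lemma reorient_reorient {A B : Finset α} (h : Disjoint A B) (X : Finset α × Finset α) :
    reorient B (reorient A X) = reorient (A ∪ B) X := by
  have := disjoint_left.mp h
  ext a <;> simp only [mem_reorient_fst, mem_reorient_snd, mem_union] <;> grind

lemma OM.supp_nonempty (M : OM α) {X : Finset α × Finset α} (hX : X ∈ M.C) :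
    (supp X).Nonempty := by
  rw [nonempty_iff_ne_empty]
  intro h
  obtain ⟨h₁, h₂⟩ := union_eq_empty.mp h
  exact M.not_empty_mem (by rwa [← show X = (∅, ∅) from Prod.ext h₁ h₂])

lemma OM.disjoint_reorient (M : OM α) (B : Finset α) {X : Finset α × Finset α}
    (hX : X ∈ M.C) : Disjoint (reorient B X).1 (reorient B X).2 := by
  have := disjoint_left.mp (M.disj X hX)
  rw [disjoint_left]
  simp only [mem_reorient_fst, mem_reorient_snd]
  grind

lemma supp_subset_erase_of_elim {X Y Z : Finset α × Finset α} {e : α}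
    (h₁ : Z.1 ⊆ (X.1 ∪ Y.1).erase e) (h₂ : Z.2 ⊆ (X.2 ∪ Y.2).erase e) :
    supp Z ⊆ (supp X ∪ supp Y).erase e := by
  intro a ha
  have := @h₁ a; have := @h₂ a
  simp only [mem_supp, mem_erase, mem_union] at *
  tauto

def OM.reorientBy (M : OM α) (B : Finset α) : OM α where
  C := reorientC B M.C
  disj := by
    rintro _ ⟨X, hX, rfl⟩
    exact M.disjoint_reorient B hX
  not_empty_mem := by
    rintro ⟨X, hX, h⟩
    have := M.supp_nonempty hX
    rw [← supp_reorient B X, h] at this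
    simp [supp] at this
  neg_mem := by
    rintro _ ⟨X, hX, rfl⟩
    exact ⟨_, M.neg_mem X hX, reorient_swap B X⟩
  incomp := by
    rintro _ ⟨X, hX, rfl⟩ _ ⟨Y, hY, rfl⟩ hXY
    rw [supp_reorient, supp_reorient] at hXY
    rcases M.incomp X hX Y hY hXY with rfl | rfl
    · exact .inl rfl
    · exact .inr (reorient_swap B Y)
  elimAx := by
    rintro _ ⟨X, hX, rfl⟩ _ ⟨Y, hY, rfl⟩ hne hne' e he
    have hXY : X ≠ Y := by rintro rfl; exact hne rfl
    have hXY' : X ≠ (Y.2, Y.1) := by rintro rfl; exact hne' (reorient_swap B Y)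
    -- In `M` itself `e ∈ X⁻ ∩ Y⁺` when `e ∈ B`, so there the roles of `X` and `Y` swap.
    obtain ⟨Z, hZ, hZ₁, hZ₂⟩ : ∃ Z ∈ M.C, Z.1 ⊆ (X.1 ∪ Y.1).erase e ∧
        Z.2 ⊆ (X.2 ∪ Y.2).erase e := by
      by_cases heB : e ∈ B
      · obtain ⟨Z, hZ, hZ₁, hZ₂⟩ := M.elimAx Y hY X hX (Ne.symm hXY)
          (fun h => hXY' (by rw [h])) e (by simp_all)
        exact ⟨Z, hZ, union_comm X.1 Y.1 ▸ hZ₁, union_comm X.2 Y.2 ▸ hZ₂⟩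
      · exact M.elimAx X hX Y hY hXY hXY' e (by simp_all)
    refine ⟨reorient B Z, ⟨Z, hZ, rfl⟩, ?_, ?_⟩ <;>
    · intro a ha
      have h₁ := @hZ₁ a
      have h₂ := @hZ₂ a
      simp only [mem_reorient_fst, mem_reorient_snd, mem_erase, mem_union] at *
      grind

lemma reorientC_reorientC {A B : Finset α} (h : Disjoint A B) (C : Set (Finset α × Finset α)) :
    reorientC B (reorientC A C) = reorientC (A ∪ B) C := by
  rw [reorientC, reorientC, Set.image_image]
  exact Set.image_congr fun X _ => reorient_reorient h X

lemma delC_reorientC (B D : Finset α) (C : Set (Finset α × Finset α)) :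
    delC D (reorientC B C) = reorientC B (delC D C) := by
  ext X
  simp only [delC, reorientC, Set.mem_image, Set.mem_ofPred_eq]
  constructor
  · rintro ⟨⟨Y, hY, rfl⟩, hdis⟩
    exact ⟨Y, ⟨hY, by rwa [supp_reorient] at hdis⟩, rfl⟩
  · rintro ⟨Y, ⟨hY, hdis⟩, rfl⟩
    exact ⟨⟨Y, hY, rfl⟩, by rwa [supp_reorient]⟩

lemma reorient_sdiff (B T : Finset α) (Y : Finset α × Finset α) :
    reorient B (Y.1 \ T, Y.2 \ T) = ((reorient B Y).1 \ T, (reorient B Y).2 \ T) := by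
  ext a <;> simp only [mem_reorient_fst, mem_reorient_snd, mem_sdiff] <;> tauto

lemma contrPre_reorientC (B T : Finset α) (C : Set (Finset α × Finset α)) :
    contrPre T (reorientC B C) = reorientC B (contrPre T C) := by
  ext Z
  simp only [contrPre, reorientC, Set.mem_image, Set.mem_ofPred_eq]
  constructor
  · rintro ⟨_, ⟨Y, hY, rfl⟩, hne, rfl⟩
    exact ⟨_, ⟨Y, hY, by rwa [supp_reorient] at hne, rfl⟩, reorient_sdiff B T Y⟩
  · rintro ⟨_, ⟨Y, hY, hne, rfl⟩, rfl⟩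
    exact ⟨_, ⟨Y, hY, rfl⟩, by rwa [supp_reorient], reorient_sdiff B T Y⟩

lemma contrC_reorientC (B T : Finset α) (C : Set (Finset α × Finset α)) :
    contrC T (reorientC B C) = reorientC B (contrC T C) := by
  ext Z
  simp only [contrC, Set.mem_ofPred_eq, contrPre_reorientC]
  constructor
  · rintro ⟨⟨W, hW, rfl⟩, hmin⟩
    refine ⟨W, ⟨hW, fun V hV hsub => ?_⟩, rfl⟩
    simpa using hmin (reorient B V) ⟨V, hV, rfl⟩ (by simpa using hsub)
  · rintro ⟨W, ⟨hW, hmin⟩, rfl⟩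
    refine ⟨⟨W, hW, rfl⟩, ?_⟩
    rintro _ ⟨V, hV, rfl⟩ hsub
    simpa using hmin V hV (by simpa using hsub)

lemma OM.contrC_empty (M : OM α) : contrC ∅ M.C = M.C := by
  have hpre : contrPre ∅ M.C = M.C := by
    ext Z
    simp only [contrPre, sdiff_empty, Set.mem_ofPred_eq]
    constructor
    · rintro ⟨Y, hY, -, rfl⟩
      exact hY
    · exact fun hZ => ⟨Z, hZ, (M.supp_nonempty hZ).ne_empty, rfl⟩
  ext Z
  simp only [contrC, hpre, Set.mem_ofPred_eq, and_iff_left_iff_imp]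
  intro hZ W hW hWZ
  rcases M.incomp W hW Z hZ hWZ with rfl | rfl
  exacts [rfl, supp_swap Z]

end Reorientation

section PositiveCircuits
variable {α : Type} [DecidableEq α]

/-- When `N` is disjoint from `S` and contains no circuit, this says that
`₋B (M ∖ (N ∪ S)ᶜ / N)` has a positive circuit. -/
def HasPosCircuit (C : Set (Finset α × Finset α)) (N S B : Finset α) : Prop :=
  ∃ Y ∈ C, supp Y ⊆ N ∪ S ∧ (supp Y ∩ S).Nonempty ∧ Disjoint (reorient B Y).2 S

lemma hasPosCircuit_of_mem {C : Set (Finset α × Finset α)} {N S B : Finset α}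
    (hN : ∀ X ∈ C, ¬ supp X ⊆ N) {Y : Finset α × Finset α} (hY : Y ∈ C)
    (hs : supp Y ⊆ N ∪ S) (hd : Disjoint (reorient B Y).2 S) : HasPosCircuit C N S B := by
  refine ⟨Y, hY, hs, ?_, hd⟩
  by_contra hS
  refine hN Y hY fun a ha => ?_
  rcases mem_union.mp (hs ha) with h | h
  · exact h
  · exact absurd ⟨a, mem_inter.mpr ⟨ha, h⟩⟩ hS

/-- A circuit `W` below `Y₀` on `S` with a negative element `f ∈ S` is eliminated against `Y₀`
at `f`; this lowers the number of negative elements in `S`, down to a circuit contradicting the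
minimality of `Y₀`. -/
lemma OM.exists_posCircuit_minimal (M : OM α) {N S : Finset α} {Y : Finset α × Finset α}
    (hY : Y ∈ M.C) (hs : supp Y ⊆ N ∪ S) (hd : Disjoint Y.2 S) :
    ∃ Y₀ ∈ M.C, supp Y₀ ⊆ N ∪ S ∧ Disjoint Y₀.2 S ∧ ∀ W ∈ M.C, supp W ⊆ N ∪ S →
      supp W ∩ S ⊆ supp Y₀ ∩ S → supp W ∩ S = supp Y₀ ∩ S := by
  obtain ⟨Y₀, ⟨hY₀, hs₀, hd₀⟩, hmin⟩ :=
    (InvImage.wf (fun Y : Finset α × Finset α => supp Y ∩ S) wellFounded_lt).has_min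
      {Y | Y ∈ M.C ∧ supp Y ⊆ N ∪ S ∧ Disjoint Y.2 S} ⟨Y, hY, hs, hd⟩
  refine ⟨Y₀, hY₀, hs₀, hd₀, fun W hW hsW hsub => ?_⟩
  induction hc : (W.2 ∩ S).card using Nat.strong_induction_on generalizing W with
  | _ n ih =>
  by_contra hne
  obtain h | ⟨f, hf⟩ := (W.2 ∩ S).eq_empty_or_nonempty
  · exact hmin W ⟨hW, hsW, disjoint_iff_inter_eq_empty.mpr h⟩ (lt_of_le_of_ne hsub hne)
  have hfW : f ∈ W.2 := (mem_inter.mp hf).1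
  have hfS : f ∈ S := (mem_inter.mp hf).2
  have hfY₀ : f ∈ Y₀.1 := by
    have := hsub (mem_inter.mpr ⟨mem_union_right _ hfW, hfS⟩)
    have := disjoint_left.mp hd₀
    simp only [mem_inter, mem_supp] at *
    grind
  obtain ⟨Z, hZ, hZ₁, hZ₂⟩ := M.elimAx Y₀ hY₀ W hW (by rintro rfl; exact hne rfl)
    (by rintro rfl; exact hne (by rw [supp_swap])) f (mem_inter.mpr ⟨hfY₀, hfW⟩)
  have hd₀' := disjoint_left.mp hd₀
  simp only [subset_iff, mem_erase, mem_union, mem_supp, mem_inter] at hZ₁ hZ₂ hs₀ hsW hsub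
  have hZs : supp Z ⊆ N ∪ S := by
    intro a; simp only [mem_supp, mem_union]; grind
  have hZsub : supp Z ∩ S ⊆ (supp Y₀ ∩ S).erase f := by
    intro a; simp only [mem_inter, mem_supp, mem_erase]; grind
  have hZneg : Z.2 ∩ S ⊆ (W.2 ∩ S).erase f := by
    intro a; simp only [mem_inter, mem_erase]; grind
  have hZeq := ih _ (hc ▸ (card_le_card hZneg).trans_lt (card_erase_lt_of_mem hf)) Z hZ hZs
    (hZsub.trans (erase_subset _ _)) rfl
  have := hZsub (hZeq ▸ mem_inter.mpr ⟨mem_union_left _ hfY₀, hfS⟩)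
  exact (mem_erase.mp this).1 rfl

lemma supp_sdiff (T : Finset α) (Y : Finset α × Finset α) :
    supp (Y.1 \ T, Y.2 \ T) = supp Y \ T := by
  simp [supp, union_sdiff_distrib]

lemma OM.acyclic_reorientC_contrC_delC_iff [Fintype α] (M : OM α) {E N : Finset α}
    (B : Finset α) (hNE : N ⊆ E) (hN : ∀ X ∈ M.C, ¬ supp X ⊆ N) :
    Acyclic (reorientC B (contrC N (delC (E \ N) M.C))) ↔ ¬ HasPosCircuit M.C N Eᶜ B := by
  rw [← contrC_reorientC, ← delC_reorientC]
  have hdel : ∀ X : Finset α, Disjoint X (E \ N) ↔ X ⊆ N ∪ Eᶜ := fun X => by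
    simp only [disjoint_left, subset_iff, mem_sdiff, mem_union, mem_compl]
    exact forall₂_congr fun a _ => by tauto
  have hsdiff : ∀ {X : Finset α}, X ⊆ N ∪ Eᶜ → X \ N = X ∩ Eᶜ := fun {X} hX => by
    ext a; have := @hX a; have := @hNE a
    simp only [mem_sdiff, mem_inter, mem_union, mem_compl] at *; tauto
  constructor
  · rintro hac ⟨Y, hY, hs, -, hd⟩
    obtain ⟨Y₀, hY₀, hs₀, hd₀, hmin⟩ := (M.reorientBy B).exists_posCircuit_minimal
      (⟨Y, hY, rfl⟩ : reorient B Y ∈ (M.reorientBy B).C) (by rwa [supp_reorient]) hd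
    refine hac _ ⟨⟨Y₀, ⟨hY₀, (hdel _).mpr hs₀⟩, ?_, rfl⟩, ?_⟩ ?_
    · obtain ⟨Y', hY', rfl⟩ := hY₀
      intro h
      exact hN Y' hY' (by rw [← supp_reorient B Y']; exact sdiff_eq_empty_iff_subset.mp h)
    · rintro _ ⟨W, ⟨hW, hWd⟩, -, rfl⟩ hsub
      rw [(hdel _).mp hWd |> hsdiff |> (supp_sdiff N W).trans,
        hsdiff hs₀ |> (supp_sdiff N Y₀).trans] at hsub ⊢
      exact hmin W hW ((hdel _).mp hWd) hsub
    · have := disjoint_left.mp hd₀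
      ext a; have := @hs₀ a
      simp only [mem_sdiff, mem_union, mem_supp, mem_compl, notMem_empty] at *
      tauto
  · rintro hno _ ⟨⟨_, ⟨⟨Y, hY, rfl⟩, hdis⟩, -, rfl⟩, -⟩ hX
    rw [supp_reorient, hdel] at hdis
    refine hno (hasPosCircuit_of_mem hN hY hdis ?_)
    rw [disjoint_left]
    exact fun a ha haE => mem_compl.mp haE (hNE (sdiff_eq_empty_iff_subset.mp hX ha))

variable {C : Set (Finset α × Finset α)} {N S A B : Finset α} {e : α}

lemma HasPosCircuit.insert_outside (heN : e ∉ N) (heS : e ∉ S) (hAB : ∀ a ∈ S, a ∈ A ↔ a ∈ B)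
    (h : HasPosCircuit C N S B) : HasPosCircuit C N (insert e S) A := by
  obtain ⟨Y, hY, hs, ⟨b, hb⟩, hd⟩ := h
  have hd := disjoint_left.mp hd
  simp only [subset_iff, mem_union, mem_supp, mem_inter, mem_reorient_snd] at hs hb hd
  refine ⟨Y, hY, ?_, ⟨b, ?_⟩, ?_⟩
  · intro a; simp only [mem_union, mem_insert, mem_supp]; grind
  · simp only [mem_inter, mem_insert, mem_supp]; grind
  · rw [disjoint_left]; intro a; simp only [mem_insert, mem_reorient_snd]; grind

lemma HasPosCircuit.contract (hN : ∀ X ∈ C, ¬ supp X ⊆ N) (he : e ∈ N)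
    (hAB : ∀ a ∈ S, a ∈ A ↔ a ∈ B) (h : HasPosCircuit C (N.erase e) (insert e S) B) :
    HasPosCircuit C N S A := by
  obtain ⟨Y, hY, hs, -, hd⟩ := h
  have hd := disjoint_left.mp hd
  simp only [subset_iff, mem_union, mem_supp, mem_erase, mem_insert, mem_reorient_snd] at hs hd
  refine hasPosCircuit_of_mem hN hY ?_ ?_
  · intro a; simp only [mem_union, mem_supp]; grind
  · rw [disjoint_left]; intro a; simp only [mem_reorient_snd]; grind

lemma HasPosCircuit.uncontract (M : OM α) (heA : e ∉ A)
    (h : HasPosCircuit M.C (insert e N) S A) :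
    HasPosCircuit M.C N (insert e S) A ∨ HasPosCircuit M.C N (insert e S) (insert e A) := by
  obtain ⟨Y, hY, hs, ⟨b, hb⟩, hd⟩ := h
  have hY₁₂ := disjoint_left.mp (M.disj Y hY)
  have hd := disjoint_left.mp hd
  simp only [subset_iff, mem_union, mem_supp, mem_insert, mem_inter, mem_reorient_snd] at hs hb hd
  have hs' : supp Y ⊆ N ∪ insert e S := by
    intro a; simp only [mem_union, mem_insert, mem_supp]; grind
  have hb' : (supp Y ∩ insert e S).Nonempty :=
    ⟨b, by simp only [mem_inter, mem_insert, mem_supp]; tauto⟩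
  by_cases he : e ∈ Y.2
  · refine .inr ⟨Y, hY, hs', hb', ?_⟩
    rw [disjoint_left]; intro a; simp only [mem_insert, mem_reorient_snd]; grind
  · refine .inl ⟨Y, hY, hs', hb', ?_⟩
    rw [disjoint_left]; intro a; simp only [mem_insert, mem_reorient_snd]; grind

end PositiveCircuits

section NBC
variable {α : Type} [DecidableEq α] [LinearOrder α] {M : OM α} {N : Finset α}

lemma IsNBC.not_supp_subset (h : IsNBC M N) : ∀ X ∈ M.C, ¬ supp X ⊆ N :=
  fun X hX hs => h X hX (M.supp_nonempty hX) ((erase_subset _ _).trans hs)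

lemma IsNBC.mono (h : IsNBC M N) {N' : Finset α} (hN' : N' ⊆ N) : IsNBC M N' :=
  fun X hX hne hc => h X hX hne (hc.trans hN')

lemma IsNBC.not_supp_subset_insert (h : IsNBC M N) {e : α} (hN : ∀ a ∈ N, a < e) :
    ∀ X ∈ M.C, ¬ supp X ⊆ insert e N := by
  intro X hX hs
  by_cases heX : e ∈ supp X
  · have hmax : (supp X).max' (M.supp_nonempty hX) = e := by
      refine le_antisymm (max'_le _ _ _ fun a ha => ?_) (le_max' _ e heX)
      rcases mem_insert.mp (hs ha) with rfl | ha
      exacts [le_rfl, (hN a ha).le]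
    refine h X hX (M.supp_nonempty hX) fun a ha => ?_
    rw [hmax, mem_erase] at ha
    exact (mem_insert.mp (hs ha.2)).resolve_left ha.1
  · exact h.not_supp_subset X hX fun a ha =>
      (mem_insert.mp (hs ha)).resolve_left (by rintro rfl; exact heX ha)

variable [LocallyFiniteOrderTop α] {A : Finset α} {e : α}

/-- A broken circuit in `N ∪ {e}` comes from a circuit `X` whose elements `≥ e` are `e` and its
maximum `g`. Orienting `X` so that `₋A X` is positive at `g`, it witnesses a positive circuit for
`A` or for `A ∪ {e}` according to the sign of `e`. -/
lemma IsNBC.insert (hNBC : IsNBC M N) (hN : ∀ a ∈ N, a < e) (heA : e ∉ A)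
    (h₁ : ¬ HasPosCircuit M.C N (Ici e) A) (h₂ : ¬ HasPosCircuit M.C N (Ici e) (insert e A)) :
    IsNBC M (insert e N) := by
  intro X hX hne hc
  set g := (supp X).max' hne
  have heX : e ∈ supp X := by
    by_contra heX
    exact hNBC X hX hne fun a ha => (mem_insert.mp (hc ha)).resolve_left
      (by rintro rfl; exact heX (mem_of_mem_erase ha))
  have heg : e ≤ g := le_max' _ e heX
  obtain ⟨Y, hY, hYX, hg⟩ : ∃ Y ∈ M.C, supp Y = supp X ∧ g ∉ (reorient A Y).2 := by
    by_cases hg : g ∈ (reorient A X).2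
    · exact ⟨(X.2, X.1), M.neg_mem X hX, supp_swap X,
        fun h => disjoint_left.mp (M.disjoint_reorient A hX) h hg⟩
    · exact ⟨X, hX, rfl, hg⟩
  have hgX : g ∈ supp X := max'_mem _ _
  have hY₁₂ := disjoint_left.mp (M.disj Y hY)
  have hYe : ∀ a ∈ supp Y, a ∈ N ∨ a = e ∨ a = g := by
    intro a ha
    rw [hYX] at ha
    by_cases hag : a = g
    · exact .inr (.inr hag)
    · have := hc (mem_erase.mpr ⟨hag, ha⟩)
      rw [mem_insert] at this
      tauto
  have hsY : supp Y ⊆ N ∪ Ici e := by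
    intro a ha
    rcases hYe a ha with h | rfl | rfl
    · exact mem_union_left _ h
    · exact mem_union_right _ (mem_Ici.mpr le_rfl)
    · exact mem_union_right _ (mem_Ici.mpr heg)
  have hNe : ∀ a ∈ N, a ∉ Ici e := fun a ha h => (hN a ha).not_ge (mem_Ici.mp h)
  simp only [mem_supp] at hYe
  simp only [mem_reorient_snd] at hg
  by_cases he : e ∈ (reorient A Y).2
  · refine h₂ (hasPosCircuit_of_mem hNBC.not_supp_subset hY hsY ?_)
    rw [disjoint_left]
    intro a ha haI
    simp only [mem_reorient_snd, mem_insert] at ha he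
    grind
  · refine h₁ (hasPosCircuit_of_mem hNBC.not_supp_subset hY hsY ?_)
    rw [disjoint_left]
    intro a ha haI
    simp only [mem_reorient_snd] at ha he
    grind

/-- Positive circuits for `A` and for `A ∪ {e}` through `e` have opposite signs at `e`, so `e` can
be eliminated between them. They are not opposite circuits, as such a circuit would lie in
`N ∪ {e}`. -/
lemma HasPosCircuit.Ioi_of_Ici (hNBC : IsNBC M N) (hN : ∀ a ∈ N, a < e) (heA : e ∉ A)
    (h₁ : HasPosCircuit M.C N (Ici e) A) (h₂ : HasPosCircuit M.C N (Ici e) (insert e A)) :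
    HasPosCircuit M.C N (Ioi e) A := by
  obtain ⟨Y, hY, hYs, -, hYd⟩ := h₁
  obtain ⟨Z, hZ, hZs, -, hZd⟩ := h₂
  have hYd := disjoint_left.mp hYd
  have hZd := disjoint_left.mp hZd
  have hZ₁₂ := disjoint_left.mp (M.disj Z hZ)
  simp only [mem_reorient_snd, mem_insert, mem_Ici] at hYd hZd
  simp only [subset_iff, mem_union, mem_supp, mem_Ici] at hYs hZs
  have hNe : ∀ a ∈ N, ¬ e ≤ a := fun a ha => (hN a ha).not_ge
  have descend : ∀ W ∈ M.C, supp W ⊆ N ∪ Ioi e → Disjoint (reorient A W).2 (Ioi e) →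
      HasPosCircuit M.C N (Ioi e) A :=
    fun W hW => hasPosCircuit_of_mem hNBC.not_supp_subset hW
  by_cases heY : e ∈ Y.1; swap
  · refine descend Y hY ?_ ?_
    · intro a; simp only [mem_supp, mem_union, mem_Ioi]; grind
    · rw [disjoint_left]; intro a; simp only [mem_reorient_snd, mem_Ioi]; grind
  by_cases heZ : e ∈ Z.2; swap
  · refine descend Z hZ ?_ ?_
    · intro a; simp only [mem_supp, mem_union, mem_Ioi]; grind
    · rw [disjoint_left]; intro a; simp only [mem_reorient_snd, mem_Ioi]; grind
  have hne : reorient A Y ≠ reorient A Z := by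
    intro h
    have := congrArg (e ∈ ·.1) h
    simp only [mem_reorient_fst, eq_iff_iff] at this
    grind
  have hne' : reorient A Y ≠ ((reorient A Z).2, (reorient A Z).1) := by
    intro h
    refine hNBC.not_supp_subset_insert hN Y hY fun a ha => ?_
    have h₁ := congrArg (a ∈ ·.1) h
    have h₂ := congrArg (a ∈ ·.2) h
    simp only [mem_reorient_fst, mem_reorient_snd, eq_iff_iff] at h₁ h₂
    simp only [mem_supp] at ha
    simp only [mem_insert]
    grind
  obtain ⟨_, ⟨W, hW, rfl⟩, hW₁, hW₂⟩ := (M.reorientBy A).elimAx _ ⟨Y, hY, rfl⟩ _ ⟨Z, hZ, rfl⟩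
    hne hne' e (by simp only [mem_inter, mem_reorient_fst, mem_reorient_snd]; grind)
  have hWs := supp_subset_erase_of_elim hW₁ hW₂
  simp only [supp_reorient, subset_iff, mem_erase, mem_union, mem_supp] at hWs
  simp only [subset_iff, mem_erase, mem_union, mem_reorient_snd] at hW₂
  refine descend W hW ?_ ?_
  · intro a; simp only [mem_supp, mem_union, mem_Ioi]; grind
  · rw [disjoint_left]; intro a; simp only [mem_reorient_snd, mem_Ioi]; grind

end NBC

section Step
variable {α : Type} [DecidableEq α] [LinearOrder α] [LocallyFiniteOrderTop α]
  [LocallyFiniteOrderBot α] (M : OM α) (e : α)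

/-- `𝒩_k` with `E_k` and `E − E_k` replaced by `L` and `U`. -/
def admissiblePairs (L U : Finset α) : Set (Finset α × Finset α) :=
  {p | p.1 ⊆ L ∧ IsNBC M p.1 ∧ p.2 ⊆ U ∧ ¬ HasPosCircuit M.C p.1 U p.2}

open scoped Classical in
/-- `ψ` at the element `e`, with its acyclicity test rephrased through `HasPosCircuit`. -/
noncomputable def posStep (p : Finset α × Finset α) : Finset α × Finset α :=
  if e ∈ p.2 then (p.1, p.2.erase e)
  else if HasPosCircuit M.C p.1 (Ici e) (insert e p.2) then p
  else (insert e p.1, p.2)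

open scoped Classical in
noncomputable def posStepInv (p : Finset α × Finset α) : Finset α × Finset α :=
  if e ∈ p.1 then (p.1.erase e, p.2)
  else if HasPosCircuit M.C p.1 (Ici e) (insert e p.2) then p
  else (p.1, insert e p.2)

variable {M e}

lemma posStep_mapsTo :
    Set.MapsTo (posStep M e) (admissiblePairs M (Iio e) (Ici e))
      (admissiblePairs M (Iic e) (Ioi e)) := by
  rintro ⟨N, A⟩ ⟨hN, hNBC, hA, hpos⟩
  have hN' : ∀ a ∈ N, a < e := fun a ha => mem_Iio.mp (hN ha)
  have heN : e ∉ N := fun h => lt_irrefl e (hN' e h)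
  have hNI : N ⊆ Iic e := hN.trans Iio_subset_Iic_self
  have hAI : A.erase e ⊆ Ioi e := fun a ha => by
    have := mem_Ici.mp (hA (mem_of_mem_erase ha))
    exact mem_Ioi.mpr (lt_of_le_of_ne this (ne_of_mem_erase ha).symm)
  rw [← Ioi_insert] at hpos
  dsimp only [posStep]
  split_ifs with heA hins
  · refine ⟨hNI, hNBC, hAI, fun h => hpos (h.insert_outside heN notMem_Ioi_self fun a ha => ?_)⟩
    rw [mem_erase, and_iff_right (mem_Ioi.mp ha).ne']
  · rw [erase_eq_of_notMem heA] at hAI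
    exact ⟨hNI, hNBC, hAI, fun h => hpos (h.insert_outside heN notMem_Ioi_self fun _ _ => .rfl)⟩
  · rw [erase_eq_of_notMem heA] at hAI
    refine ⟨insert_subset (mem_Iic.mpr le_rfl) hNI, hNBC.insert hN' heA ?_ hins, hAI, fun h => ?_⟩
    · rwa [← Ioi_insert]
    · rw [← Ioi_insert] at hins
      exact (h.uncontract M heA).elim hpos hins

lemma posStepInv_mapsTo :
    Set.MapsTo (posStepInv M e) (admissiblePairs M (Iic e) (Ioi e))
      (admissiblePairs M (Iio e) (Ici e)) := by
  rintro ⟨N, A⟩ ⟨hN, hNBC, hA, hpos⟩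
  have hAI : A ⊆ Ici e := hA.trans Ioi_subset_Ici_self
  have hNI : ∀ {N'}, N' ⊆ N → e ∉ N' → N' ⊆ Iio e := fun hN' he a ha =>
    mem_Iio.mpr (lt_of_le_of_ne (mem_Iic.mp (hN (hN' ha))) (by rintro rfl; exact he ha))
  dsimp only [posStepInv]
  split_ifs with heN hins
  · refine ⟨hNI (erase_subset _ _) (notMem_erase e N), hNBC.mono (erase_subset _ _), hAI,
      fun h => hpos (HasPosCircuit.contract hNBC.not_supp_subset heN (fun _ _ => .rfl) ?_)⟩
    rwa [Ioi_insert]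
  · have hN' := hNI subset_rfl heN
    exact ⟨hN', hNBC, hAI, fun h => hpos (h.Ioi_of_Ici hNBC (fun a ha => mem_Iio.mp (hN' ha))
      (fun he => notMem_Ioi_self (hA he)) hins)⟩
  · refine ⟨hNI subset_rfl heN, hNBC, insert_subset (mem_Ici.mpr le_rfl) hAI, hins⟩

lemma posStepInv_posStep :
    Set.LeftInvOn (posStepInv M e) (posStep M e) (admissiblePairs M (Iio e) (Ici e)) := by
  rintro ⟨N, A⟩ ⟨hN, -, -, hpos⟩
  have heN : e ∉ N := fun h => notMem_Iio_self (hN h)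
  by_cases heA : e ∈ A
  · simp [posStep, posStepInv, heA, heN, insert_erase heA, hpos]
  · by_cases hins : HasPosCircuit M.C N (Ici e) (insert e A) <;>
      simp [posStep, posStepInv, heA, heN, hins]

lemma posStep_posStepInv :
    Set.LeftInvOn (posStep M e) (posStepInv M e) (admissiblePairs M (Iic e) (Ioi e)) := by
  rintro ⟨N, A⟩ ⟨-, hNBC, hA, hpos⟩
  have heA : e ∉ A := fun h => notMem_Ioi_self (hA h)
  by_cases heN : e ∈ N
  · have hins : ¬ HasPosCircuit M.C (N.erase e) (Ici e) (insert e A) := fun h =>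
      hpos (HasPosCircuit.contract hNBC.not_supp_subset heN
        (fun a ha => by rw [mem_insert, or_iff_right (mem_Ioi.mp ha).ne']) (by rwa [Ioi_insert]))
    simp [posStep, posStepInv, heA, heN, insert_erase heN, hins]
  · by_cases hins : HasPosCircuit M.C N (Ici e) (insert e A) <;>
      simp [posStep, posStepInv, heA, heN, hins, erase_insert heA]

lemma bijOn_posStep :
    Set.BijOn (posStep M e) (admissiblePairs M (Iio e) (Ici e))
      (admissiblePairs M (Iic e) (Ioi e)) :=
  Set.InvOn.bijOn ⟨posStepInv_posStep, posStep_posStepInv⟩ posStep_mapsTo posStepInv_mapsTo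

end Step

section Fin
variable {m : ℕ}

@[simp] lemma mem_Ek {k : ℕ} {i : Fin m} : i ∈ Ek m k ↔ (i : ℕ) < k := by
  simp [Ek]

lemma Ek_eq_Iio {j : ℕ} (hj : j < m) : Ek m j = Iio ⟨j, hj⟩ := by
  ext i; simp [Fin.lt_def]

lemma compl_Ek_eq_Ici {j : ℕ} (hj : j < m) : (Ek m j)ᶜ = Ici ⟨j, hj⟩ := by
  ext i; simp [Fin.le_def]

lemma Ek_succ_eq_Iic {j : ℕ} (hj : j < m) : Ek m (j + 1) = Iic ⟨j, hj⟩ := by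
  ext i; simp [Fin.le_def]

lemma compl_Ek_succ_eq_Ioi {j : ℕ} (hj : j < m) : (Ek m (j + 1))ᶜ = Ioi ⟨j, hj⟩ := by
  ext i; simp [Fin.lt_def]

lemma NFam_eq_admissiblePairs (M : OM (Fin m)) (k : ℕ) :
    NFam M k = admissiblePairs M (Ek m k) (Ek m k)ᶜ := by
  ext ⟨N, A⟩
  refine and_congr_right fun hN => and_congr_right fun hNBC => and_congr_right fun _ => ?_
  exact M.acyclic_reorientC_contrC_delC_iff A hN hNBC.not_supp_subset

lemma psi_eqOn_posStep (M : OM (Fin m)) {j : ℕ} (hj : j < m) :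
    Set.EqOn (psi M j ⟨j, hj⟩) (posStep M ⟨j, hj⟩) (NFam M j) := by
  rintro ⟨N, A⟩ hp
  obtain ⟨hN, hNBC, -, -⟩ := hp
  by_cases heA : (⟨j, hj⟩ : Fin m) ∈ A
  · simp [psi, posStep, heA]
  · have hac : Acyclic (reorientC {⟨j, hj⟩} (MNA M j N A)) ↔
        ¬ HasPosCircuit M.C N (Ici ⟨j, hj⟩) (insert ⟨j, hj⟩ A) := by
      rw [MNA, reorientC_reorientC (disjoint_singleton_right.mpr heA), union_singleton,
        M.acyclic_reorientC_contrC_delC_iff _ hN hNBC.not_supp_subset, compl_Ek_eq_Ici hj]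
    by_cases hpos : HasPosCircuit M.C N (Ici ⟨j, hj⟩) (insert ⟨j, hj⟩ A) <;>
      simp [psi, posStep, heA, hac, hpos]

lemma bijOn_psi (M : OM (Fin m)) {j : ℕ} (hj : j < m) :
    Set.BijOn (psi M j ⟨j, hj⟩) (NFam M j) (NFam M (j + 1)) := by
  have h : Set.BijOn (posStep M ⟨j, hj⟩) (NFam M j) (NFam M (j + 1)) := by
    rw [NFam_eq_admissiblePairs, NFam_eq_admissiblePairs, compl_Ek_eq_Ici hj, Ek_eq_Iio hj,
      compl_Ek_succ_eq_Ioi hj, Ek_succ_eq_Iic hj]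
    exact bijOn_posStep
  exact h.congr (psi_eqOn_posStep M hj).symm

lemma bijOn_psiIter (M : OM (Fin m)) {k : ℕ} (hk : k ≤ m) :
    Set.BijOn (psiIter M k) (NFam M 0) (NFam M k) := by
  induction k with
  | zero => exact Set.bijOn_id _
  | succ k ih =>
    have hk' : k < m := hk
    have h : psiIter M (k + 1) = psi M k ⟨k, hk'⟩ ∘ psiIter M k :=
      funext fun p => by simp [psiIter, hk']
    rw [h]
    exact (bijOn_psi M hk').comp (ih hk'.le)

lemma MNA_zero_empty (M : OM (Fin m)) (A : Finset (Fin m)) :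
    MNA M 0 ∅ A = reorientC A M.C := by
  have hdel : delC (Ek m 0 \ ∅) M.C = M.C := by ext; simp [delC, Ek]
  rw [MNA, hdel, M.contrC_empty]

lemma isNBC_empty {M : OM (Fin m)} (hM : Loopless M) : IsNBC M ∅ := by
  intro X hX hne hc
  rw [subset_empty, erase_eq_empty_iff] at hc
  exact hc.elim hne.ne_empty fun h => hM X hX (by rw [h, card_singleton])

lemma NFam_zero {M : OM (Fin m)} (hM : Loopless M) :
    NFam M 0 = {p | p.1 = ∅ ∧ Acyclic (reorientC p.2 M.C)} := by
  have hE : Ek m 0 = ∅ := by ext; simp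
  ext ⟨N, A⟩
  simp only [NFam, hE, subset_empty, compl_empty, subset_univ, true_and, Set.mem_ofPred_eq]
  constructor
  · rintro ⟨rfl, -, hac⟩
    exact ⟨rfl, by rwa [MNA_zero_empty] at hac⟩
  · rintro ⟨rfl, hac⟩
    exact ⟨rfl, isNBC_empty hM, by rwa [MNA_zero_empty]⟩

lemma NFam_last (M : OM (Fin m)) : NFam M m = {p | IsNBC M p.1 ∧ p.2 = ∅} := by
  have hE : Ek m m = univ := by ext i; simp
  ext ⟨N, A⟩
  simp [NFam_eq_admissiblePairs, admissiblePairs, hE, HasPosCircuit]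

end Fin

/-- `𝒩₀ = {(∅, A) : ₋ₐM acyclic}`, `𝒩_m = {(N, ∅) : N an NBC subset}`, the composition
`ψ = ψ_m ∘ ⋯ ∘ ψ₁` is a bijection from `𝒩₀` onto `𝒩_m`, and the induced map
`A ↦ N` where `ψ(∅, A) = (N, ∅)` is a bijection from the acyclic reorientation sets
onto the NBC subsets of the underlying matroid. -/
theorem stmt_7 (m : ℕ) (M : OM (Fin m)) (hM : Loopless M) :
    NFam M 0 = {p | p.1 = ∅ ∧ Acyclic (reorientC p.2 M.C)} ∧
    NFam M m = {p | IsNBC M p.1 ∧ p.2 = ∅} ∧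
    Set.BijOn (psiIter M m) (NFam M 0) (NFam M m) ∧
    Set.BijOn (fun A : Finset (Fin m) => (psiIter M m (∅, A)).1)
      {A | Acyclic (reorientC A M.C)} {N | IsNBC M N} := by
  have hψ := bijOn_psiIter M le_rfl
  refine ⟨NFam_zero hM, NFam_last M, hψ, ?_⟩
  rw [NFam_zero hM, NFam_last M] at hψ
  exact hψ.fst_of_slices
end

section
/- Let M = (E, 𝒞) be an oriented matroid and e ∈ E. If M is acyclic and the reorientation ₋{e}M is acyclic, then the contraction M/{e} is acyclic. -/
open Finset

/-- If `M` is acyclic and the reorientation `₋{e}M` is acyclic, then the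
contraction `M/{e}` is acyclic. -/
theorem stmt_8 {α : Type} [DecidableEq α] (M : OM α) (e : α)
    (h1 : Acyclic M.C) (h2 : Acyclic (reorientC {e} M.C)) :
    Acyclic (contrC {e} M.C) := by
  rintro Z ⟨⟨Y, hY, -, rfl⟩, -⟩ hZ2
  simp only at hZ2
  -- Y.2 ⊆ {e}
  have hY2 : Y.2 ⊆ {e} := by
    intro x hx
    by_contra hxe
    have : x ∈ Y.2 \ ({e} : Finset α) := Finset.mem_sdiff.mpr ⟨hx, by simpa using hxe⟩
    rw [hZ2] at this; simp at this
  have hY2ne : Y.2 ≠ ∅ := h1 Y hY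
  have heY2 : e ∈ Y.2 := by
    obtain ⟨x, hx⟩ := Finset.nonempty_iff_ne_empty.mpr hY2ne
    have := hY2 hx; simp at this; subst this; exact hx
  have hre : (reorient {e} Y).2 ≠ ∅ := h2 _ ⟨Y, hY, rfl⟩
  have heY1 : e ∈ Y.1 := by
    rcases Finset.nonempty_iff_ne_empty.mpr hre with ⟨x, hx⟩
    simp only [reorient, Finset.mem_union, Finset.mem_sdiff, Finset.mem_inter,
      Finset.mem_singleton] at hx
    rcases hx with ⟨hx1, hx2⟩ | ⟨hx1, rfl⟩
    · exact absurd (by simpa using hY2 hx1) hx2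
    · exact hx1
  exact Finset.disjoint_left.mp (M.disj Y hY) heY1 heY2
end

section
/- For each 1 ≤ k ≤ m: every pair (ℬ, Δ) ∈ ℬ_{k−1} is contained in a unique region Δ′ of 𝒜_kᶜ/ℬ and satisfies exactly one of the three conditions in the definition of φ_k, and φ_k is a bijection from ℬ_{k−1} onto ℬ_k. -/
open Set

/-- An affine hyperplane in `ℝⁿ`, given by a nonzero normal vector `a` and
a constant `b`: the hyperplane is `{x : ⟨a, x⟩ = b}`. -/
structure Hyp (n : ℕ) where
  a : Fin n → ℝ
  b : ℝ
  ha : a ≠ 0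

/-- The hyperplane itself, as a subset of `ℝⁿ`. -/
def Hyp.carrier {n : ℕ} (H : Hyp n) : Set (Fin n → ℝ) := {x | ∑ i, H.a i * x i = H.b}

/-- The positive open side of a hyperplane. -/
def Hyp.pos {n : ℕ} (H : Hyp n) : Set (Fin n → ℝ) := {x | H.b < ∑ i, H.a i * x i}

/-- The negative open side of a hyperplane. -/
def Hyp.neg {n : ℕ} (H : Hyp n) : Set (Fin n → ℝ) := {x | ∑ i, H.a i * x i < H.b}

/-- The intersection `⋂ℬ` of the hyperplanes indexed by `S` (`ℝⁿ` if `S = ∅`). -/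
def interA {n m : ℕ} (H : Fin m → Hyp n) (S : Finset (Fin m)) : Set (Fin n → ℝ) :=
  ⋂ i ∈ S, (H i).carrier

/-- The dimension of an affine subset of `ℝⁿ` (the rank of its vector span). -/
noncomputable def adim {n : ℕ} (s : Set (Fin n → ℝ)) : ℕ :=
  Module.finrank ℝ (vectorSpan ℝ s)

/-- The defining property of an affine circuit: `⋂ℬ ≠ ∅` and `dim(⋂ℬ) + |ℬ| = n + 1`. -/
def CircuitProp {n m : ℕ} (H : Fin m → Hyp n) (S : Finset (Fin m)) : Prop :=
  (interA H S).Nonempty ∧ adim (interA H S) + S.card = n + 1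

/-- An affine circuit: an inclusion-minimal `S` with `⋂S ≠ ∅` and `dim(⋂S) + |S| = n + 1`. -/
def IsAffCircuit {n m : ℕ} (H : Fin m → Hyp n) (S : Finset (Fin m)) : Prop :=
  CircuitProp H S ∧ ∀ T ⊂ S, ¬ CircuitProp H T

/-- An affine NBC subset: `⋂S ≠ ∅` and `S` contains no affine broken circuit, i.e. no
affine circuit with its maximal element deleted. -/
def IsAffNBC {n m : ℕ} (H : Fin m → Hyp n) (S : Finset (Fin m)) : Prop :=
  (interA H S).Nonempty ∧
    ∀ T : Finset (Fin m), IsAffCircuit H T → ∀ h : T.Nonempty, ¬ T.erase (T.max' h) ⊆ S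

/-- `Δ` is a region of the open set `U`, i.e. a connected component of `U`. -/
def IsRegionIn {n : ℕ} (U Δ : Set (Fin n → ℝ)) : Prop :=
  ∃ x ∈ U, Δ = connectedComponentIn U x

/-- The set of regions of the arrangement `H`: connected components of the complement
of the union of the hyperplanes. -/
def regions {n m : ℕ} (H : Fin m → Hyp n) : Set (Set (Fin n → ℝ)) :=
  {Δ | IsRegionIn (Set.univ \ ⋃ i, (H i).carrier) Δ}

/-- `𝒜_k = {H₁, …, H_k}`, as a set of indices. -/
def Ak (m k : ℕ) : Finset (Fin m) := Finset.filter (fun i => (i : ℕ) < k) Finset.univ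

/-- The underlying open set of the restriction `𝒜_kᶜ/ℬ`: the affine subspace `⋂ℬ`
minus the traces `(⋂ℬ) ∩ H` of those hyperplanes `H ∈ 𝒜_kᶜ` with
`∅ ≠ (⋂ℬ) ∩ H ⊊ ⋂ℬ`; its connected components are the regions of `𝒜_kᶜ/ℬ`. -/
def restCompl {n m : ℕ} (H : Fin m → Hyp n) (k : ℕ) (S : Finset (Fin m)) :
    Set (Fin n → ℝ) :=
  interA H S \
    ⋃ i ∈ {i : Fin m | k ≤ (i : ℕ) ∧ (interA H S ∩ (H i).carrier).Nonempty ∧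
        interA H S ∩ (H i).carrier ≠ interA H S}, (H i).carrier

/-- The set `ℬ_k` of pairs `(ℬ, Δ)` with `ℬ ⊆ 𝒜_k` an affine NBC subset of `𝒜`
and `Δ` a region of `𝒜_kᶜ/ℬ`. -/
def BFam {n m : ℕ} (H : Fin m → Hyp n) (k : ℕ) :
    Set (Finset (Fin m) × Set (Fin n → ℝ)) :=
  {p | p.1 ⊆ Ak m k ∧ IsAffNBC H p.1 ∧ IsRegionIn (restCompl H k p.1) p.2}

/-- The union of the connected components of `U` meeting `Δ`; when `Δ` is a nonempty
connected subset of `U` this is the unique region of `U` containing `Δ`. -/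
def compIn {n : ℕ} (U Δ : Set (Fin n → ℝ)) : Set (Fin n → ℝ) :=
  ⋃ x ∈ Δ, connectedComponentIn U x

open scoped Classical in
/-- The map `φ_k` (with `e = H_k`): for `(ℬ, Δ) ∈ ℬ_{k−1}`, letting `Δ′` be the unique
region of `𝒜_kᶜ/ℬ` containing `Δ`,
`φ_k(ℬ, Δ) = (ℬ ∪ {H_k}, Δ′ ∩ H_k)` if `Δ ⊆ H_k⁺` and `Δ ≠ Δ′`,
`φ_k(ℬ, Δ) = (ℬ, Δ)` if `Δ ⊆ H_k⁺` and `Δ = Δ′`, and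
`φ_k(ℬ, Δ) = (ℬ, Δ′)` if `Δ ⊆ H_k⁻`. -/
noncomputable def phi {n m : ℕ} (H : Fin m → Hyp n) (k : ℕ) (e : Fin m)
    (p : Finset (Fin m) × Set (Fin n → ℝ)) : Finset (Fin m) × Set (Fin n → ℝ) :=
  if p.2 ⊆ (H e).pos ∧ p.2 ≠ compIn (restCompl H k p.1) p.2 then
    (insert e p.1, compIn (restCompl H k p.1) p.2 ∩ (H e).carrier)
  else if p.2 ⊆ (H e).pos ∧ p.2 = compIn (restCompl H k p.1) p.2 then p
  else if p.2 ⊆ (H e).neg then (p.1, compIn (restCompl H k p.1) p.2)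
  else p

/-!
Regions of a restriction are sign cells of the convex set `⋂ℬ` cut by hyperplanes, hence
convex. For an NBC set `ℬ ⊆ 𝒜_k`, no hyperplane of `𝒜_kᶜ` contains `⋂ℬ`: otherwise its normal
lies in the span of the normals of `ℬ`, and a minimal spanning subset of `ℬ` together with it is
an affine circuit whose broken circuit lies in `ℬ`. So `𝒜_{k−1}ᶜ/ℬ` is `𝒜_kᶜ/ℬ` with `H_k`
removed, a region `Δ` of it lies on one side of `H_k`, and `Δ = Δ′ ∩ (that side)`. If
`Δ ⊆ H_k⁺` and `Δ ≠ Δ′`, then `Δ′` crosses `H_k` (intermediate value theorem), and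
`Δ′ ∩ H_k` is a region of `𝒜_kᶜ/(ℬ ∪ {H_k})`, where `ℬ ∪ {H_k}` is again NBC because a point
of `Δ′ ∩ H_k` lies on no later hyperplane. Conversely, a region `Γ` of `𝒜_kᶜ/ℬ′` has the
preimage obtained by pushing a point of `Γ ∩ H_k` slightly into `H_k⁺` (if `H_k ∈ ℬ′`) or
into `H_k⁻` (if `H_k ∉ ℬ′` and `Γ` meets `H_k`), and `Γ` itself otherwise.
-/

namespace Hyp

variable {n : ℕ} (h : Hyp n)

def lin : Module.Dual ℝ (Fin n → ℝ) where
  toFun x := ∑ i, h.a i * x i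
  map_add' x y := by simp only [Pi.add_apply, mul_add, Finset.sum_add_distrib]
  map_smul' c x := by
    simp only [Pi.smul_apply, smul_eq_mul, RingHom.id_apply, Finset.mul_sum, mul_left_comm]

def ev : (Fin n → ℝ) →ᵃ[ℝ] ℝ := h.lin.toAffineMap - AffineMap.const ℝ _ h.b

theorem ev_apply (x : Fin n → ℝ) : h.ev x = h.lin x - h.b := rfl

theorem carrier_eq : h.carrier = h.ev ⁻¹' {0} := by
  ext; simp [carrier, ev_apply, lin, sub_eq_zero]

theorem pos_eq : h.pos = h.ev ⁻¹' Ioi 0 := by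
  ext; simp [pos, ev_apply, lin]

theorem neg_eq : h.neg = h.ev ⁻¹' Iio 0 := by
  ext; simp [neg, ev_apply, lin]

variable {h}

theorem mem_carrier_iff {x : Fin n → ℝ} : x ∈ h.carrier ↔ h.ev x = 0 := by
  rw [carrier_eq]; rfl

theorem mem_pos_iff {x : Fin n → ℝ} : x ∈ h.pos ↔ 0 < h.ev x := by
  rw [pos_eq]; rfl

theorem mem_neg_iff {x : Fin n → ℝ} : x ∈ h.neg ↔ h.ev x < 0 := by
  rw [neg_eq]; rfl

variable (h)

theorem continuous_ev : Continuous h.ev := h.ev.continuous_of_finiteDimensional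

theorem isOpen_pos : IsOpen h.pos := h.pos_eq ▸ isOpen_Ioi.preimage h.continuous_ev

theorem isOpen_neg : IsOpen h.neg := h.neg_eq ▸ isOpen_Iio.preimage h.continuous_ev

theorem convex_pos : Convex ℝ h.pos := h.pos_eq ▸ (convex_Ioi 0).affine_preimage h.ev

theorem convex_neg : Convex ℝ h.neg := h.neg_eq ▸ (convex_Iio 0).affine_preimage h.ev

theorem convex_carrier : Convex ℝ h.carrier :=
  h.carrier_eq ▸ (convex_singleton 0).affine_preimage h.ev

theorem disjoint_pos_carrier : Disjoint h.pos h.carrier := by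
  rw [pos_eq, carrier_eq]; exact (disjoint_singleton_right.2 self_notMem_Ioi).preimage _

theorem disjoint_neg_carrier : Disjoint h.neg h.carrier := by
  rw [neg_eq, carrier_eq]; exact (disjoint_singleton_right.2 self_notMem_Iio).preimage _

theorem disjoint_pos_neg : Disjoint h.pos h.neg := by
  rw [pos_eq, neg_eq]; exact (Set.Iio_disjoint_Ioi_of_le le_rfl).symm.preimage _

variable {h}

theorem mem_carrier_iff_lin {x : Fin n → ℝ} : x ∈ h.carrier ↔ h.lin x = h.b := Iff.rfl

theorem compl_carrier : h.carrierᶜ = h.pos ∪ h.neg := by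
  ext x
  simp only [mem_compl_iff, mem_union, mem_carrier_iff, mem_pos_iff, mem_neg_iff]
  exact ⟨fun hx => (Ne.lt_or_gt hx).symm, fun hx => hx.elim ne_of_gt ne_of_lt⟩

end Hyp

section Preconnected

variable {n : ℕ} {h : Hyp n} {s : Set (Fin n → ℝ)}

theorem IsPreconnected.subset_pos_or_subset_neg
    (hs : IsPreconnected s) (hsh : Disjoint s h.carrier) : s ⊆ h.pos ∨ s ⊆ h.neg :=
  hs.subset_or_subset h.isOpen_pos h.isOpen_neg h.disjoint_pos_neg
    (Hyp.compl_carrier (h := h) ▸ hsh.subset_compl_right)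

theorem IsPreconnected.ev_mul_ev_pos (hs : IsPreconnected s) (hsh : Disjoint s h.carrier)
    {x y : Fin n → ℝ} (hx : x ∈ s) (hy : y ∈ s) : 0 < h.ev x * h.ev y := by
  rcases hs.subset_pos_or_subset_neg hsh with hpos | hneg
  · exact mul_pos (Hyp.mem_pos_iff.1 (hpos hx)) (Hyp.mem_pos_iff.1 (hpos hy))
  · exact mul_pos_of_neg_of_neg (Hyp.mem_neg_iff.1 (hneg hx)) (Hyp.mem_neg_iff.1 (hneg hy))

theorem IsPreconnected.subset_pos (hs : IsPreconnected s) (hsh : Disjoint s h.carrier)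
    {x : Fin n → ℝ} (hx : x ∈ s) (hxh : x ∈ h.pos) : s ⊆ h.pos :=
  (hs.subset_pos_or_subset_neg hsh).resolve_right fun hneg =>
    h.disjoint_pos_neg.notMem_of_mem_left hxh (hneg hx)

end Preconnected

section Intersection

variable {n m : ℕ} {H : Fin m → Hyp n} {S T : Finset (Fin m)}

theorem mem_interA {x : Fin n → ℝ} : x ∈ interA H S ↔ ∀ i ∈ S, x ∈ (H i).carrier := by
  simp [interA]

theorem interA_anti (hST : S ⊆ T) : interA H T ⊆ interA H S :=
  biInter_subset_biInter_left (Finset.coe_subset.2 hST)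

theorem interA_insert (j : Fin m) : interA H (insert j S) = (H j).carrier ∩ interA H S := by
  simp [interA]

theorem lineMap_mem_interA {z w : Fin n → ℝ} (hz : z ∈ interA H S) (hw : w ∈ interA H S)
    (t : ℝ) : AffineMap.lineMap z w t ∈ interA H S := by
  simp only [mem_interA, Hyp.mem_carrier_iff] at hz hw ⊢
  intro i hi
  rw [AffineMap.apply_lineMap, hz i hi, hw i hi, AffineMap.lineMap_same_apply]

theorem convex_interA (H : Fin m → Hyp n) (S : Finset (Fin m)) : Convex ℝ (interA H S) :=
  convex_iInter₂ fun i _ => (H i).convex_carrier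

end Intersection

section SignCell

variable {n m : ℕ}

def signCell (H : Fin m → Hyp n) (V : Set (Fin n → ℝ)) (J : Set (Fin m)) (x : Fin n → ℝ) :
    Set (Fin n → ℝ) :=
  {y ∈ V | ∀ j ∈ J, 0 < (H j).ev x * (H j).ev y}

variable {H : Fin m → Hyp n} {V : Set (Fin n → ℝ)} {J : Set (Fin m)}

theorem convex_signCell (hV : Convex ℝ V) (x : Fin n → ℝ) : Convex ℝ (signCell H V J x) := by
  intro y hy z hz a b ha hb hab
  refine ⟨hV hy.1 hz.1 ha hb hab, fun j hj => ?_⟩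
  have hyj := hy.2 j hj
  have hzj := hz.2 j hj
  rw [Convex.combo_affine_apply hab, smul_eq_mul, smul_eq_mul]
  rcases ha.lt_or_eq with ha | rfl
  · nlinarith [mul_nonneg hb hzj.le]
  · rw [zero_add] at hab; subst hab; simpa using hzj

theorem connectedComponentIn_diff_eq_signCell (hV : Convex ℝ V) {x : Fin n → ℝ}
    (hx : x ∈ V \ ⋃ j ∈ J, (H j).carrier) :
    connectedComponentIn (V \ ⋃ j ∈ J, (H j).carrier) x = signCell H V J x := by
  have hoff : ∀ {y}, y ∈ V \ ⋃ j ∈ J, (H j).carrier → ∀ j ∈ J, y ∉ (H j).carrier :=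
    fun hy j hj hyj => hy.2 (mem_biUnion hj hyj)
  apply Subset.antisymm
  · intro y hy
    refine ⟨(connectedComponentIn_subset _ _ hy).1, fun j hj => ?_⟩
    refine isPreconnected_connectedComponentIn.ev_mul_ev_pos ?_ (mem_connectedComponentIn hx) hy
    exact Set.disjoint_left.2 fun z hz => hoff (connectedComponentIn_subset _ _ hz) j hj
  · refine (convex_signCell hV x).isPreconnected.subset_connectedComponentIn ?_ ?_
    · exact ⟨hx.1, fun j hj => mul_self_pos.2 fun h0 => hoff hx j hj (Hyp.mem_carrier_iff.2 h0)⟩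
    · intro y hy
      refine ⟨hy.1, fun hyU => ?_⟩
      obtain ⟨j, hj, hyj⟩ := mem_iUnion₂.1 hyU
      simpa [Hyp.mem_carrier_iff.1 hyj] using hy.2 j hj

end SignCell

section LinearAlgebra

open Submodule

variable {K V ι : Type*} [Field K] [AddCommGroup V] [Module K V] {f : ι → V} {T : Finset ι}
  {v : V}

theorem linearIndepOn_of_minimal_mem_span (hv : v ∈ span K (f '' T))
    (hmin : ∀ T' ⊂ T, v ∉ span K (f '' T')) : LinearIndepOn K f T := by
  classical
  rw [linearIndepOn_iff_notMem_span]
  intro t ht htspan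
  apply hmin (T.erase t) (Finset.erase_ssubset ht)
  rwa [Finset.coe_erase, ← span_insert_eq_span htspan, ← image_insert_eq,
    insert_sdiff_singleton, insert_eq_of_mem (Finset.mem_coe.2 ht)]

theorem linearIndepOn_of_ssubset_insert [DecidableEq ι] {j : ι} (hT : LinearIndepOn K f T)
    (hmin : ∀ T' ⊂ T, f j ∉ span K (f '' T')) {R : Finset ι} (hR : R ⊂ insert j T) :
    LinearIndepOn K f R := by
  by_cases hjR : j ∈ R
  · have hRT : R.erase j ⊂ T :=
      ⟨Finset.subset_insert_iff.1 hR.1, fun hTR => hR.2 (Finset.insert_subset hjR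
        (hTR.trans (Finset.erase_subset j R)))⟩
    rw [← Finset.insert_erase hjR, Finset.coe_insert, linearIndepOn_insert (by simp)]
    exact ⟨hT.mono hRT.1, hmin _ hRT⟩
  · exact hT.mono ((Finset.subset_insert_iff_of_notMem hjR).1 hR.1)

end LinearAlgebra

section Circuits

open Module Submodule

variable {n m : ℕ} {H : Fin m → Hyp n} {S T : Finset (Fin m)} {x₀ : Fin n → ℝ}

def normalSpan (H : Fin m → Hyp n) (S : Finset (Fin m)) : Submodule ℝ (Dual ℝ (Fin n → ℝ)) :=
  span ℝ ((fun i => (H i).lin) '' S)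

theorem normalSpan_mono (hST : S ⊆ T) : normalSpan H S ≤ normalSpan H T :=
  span_mono (image_mono (Finset.coe_subset.2 hST))

theorem normalSpan_insert (j : Fin m) :
    normalSpan H (insert j S) = span ℝ (insert (H j).lin ((fun i => (H i).lin) '' S)) := by
  rw [normalSpan, Finset.coe_insert, image_insert_eq]

theorem mem_interA_iff_sub_mem (hx₀ : x₀ ∈ interA H S) {y : Fin n → ℝ} :
    y ∈ interA H S ↔ y - x₀ ∈ (normalSpan H S).dualCoannihilator := by
  rw [normalSpan, ← SetLike.mem_coe, coe_dualCoannihilator_span]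
  simp only [mem_interA, Hyp.mem_carrier_iff_lin] at hx₀ ⊢
  simp only [mem_ofPred_eq, forall_mem_image, map_sub, sub_eq_zero]
  exact forall₂_congr fun i hi => by rw [hx₀ i hi]

theorem adim_interA_add_finrank_normalSpan (hx₀ : x₀ ∈ interA H S) :
    adim (interA H S) + finrank ℝ (normalSpan H S) = n := by
  have hA : interA H S = (AffineSubspace.mk' x₀ (normalSpan H S).dualCoannihilator : Set _) := by
    ext y
    rw [mem_interA_iff_sub_mem hx₀]
    rfl
  rw [adim, hA, ← AffineSubspace.direction, AffineSubspace.direction_mk', add_comm,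
    Subspace.finrank_add_finrank_dualCoannihilator_eq, finrank_fin_fun]

theorem circuitProp_iff (hx₀ : x₀ ∈ interA H S) :
    CircuitProp H S ↔ finrank ℝ (normalSpan H S) + 1 = S.card := by
  have := adim_interA_add_finrank_normalSpan hx₀
  exact ⟨fun h => by have := h.2; omega, fun h => ⟨⟨x₀, hx₀⟩, by omega⟩⟩

theorem lin_mem_normalSpan_iff (hx₀ : x₀ ∈ interA H S) {j : Fin m}
    (hx₀j : x₀ ∈ (H j).carrier) :
    (H j).lin ∈ normalSpan H S ↔ interA H S ⊆ (H j).carrier := by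
  rw [Hyp.mem_carrier_iff_lin] at hx₀j
  constructor
  · intro hj y hy
    have := (mem_dualCoannihilator _).1 ((mem_interA_iff_sub_mem hx₀).1 hy) _ hj
    rw [map_sub, sub_eq_zero] at this
    rwa [Hyp.mem_carrier_iff_lin, this]
  · intro hsub
    rw [← Subspace.dualCoannihilator_dualAnnihilator_eq (W := normalSpan H S),
      mem_dualAnnihilator]
    intro v hv
    have hmem : x₀ + v ∈ interA H S := (mem_interA_iff_sub_mem hx₀).2 (by simpa using hv)
    have := Hyp.mem_carrier_iff_lin.1 (hsub hmem)
    rw [map_add, hx₀j] at this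
    simpa using this

theorem finrank_normalSpan_of_linearIndepOn
    (hS : LinearIndepOn ℝ (fun i => (H i).lin) (S : Set (Fin m))) :
    finrank ℝ (normalSpan H S) = S.card := by
  rw [normalSpan, image_eq_range, finrank_span_eq_card hS]; simp

theorem not_circuitProp_of_linearIndepOn
    (hS : LinearIndepOn ℝ (fun i => (H i).lin) (S : Set (Fin m))) : ¬ CircuitProp H S := by
  intro hc
  obtain ⟨x₀, hx₀⟩ := hc.1
  have := (circuitProp_iff hx₀).1 hc
  rw [finrank_normalSpan_of_linearIndepOn hS] at this
  omega

end Circuits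

section NBC

open Module Submodule

variable {n m : ℕ} {H : Fin m → Hyp n} {S T : Finset (Fin m)} {x₀ : Fin n → ℝ}

theorem exists_isAffCircuit_insert (hx₀ : x₀ ∈ interA H S) {j : Fin m} (hj : j ∉ S)
    (hsub : interA H S ⊆ (H j).carrier) : ∃ T ⊆ S, j ∉ T ∧ IsAffCircuit H (insert j T) := by
  classical
  have hspan : (H j).lin ∈ normalSpan H S := (lin_mem_normalSpan_iff hx₀ (hsub hx₀)).2 hsub
  obtain ⟨T, hT, hTmin⟩ := Finset.exists_min_image
    (S.powerset.filter fun T => (H j).lin ∈ normalSpan H T) Finset.card ⟨S, by simpa using hspan⟩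
  rw [Finset.mem_filter, Finset.mem_powerset] at hT
  obtain ⟨hTS, hTspan⟩ := hT
  have hjT : j ∉ T := fun h => hj (hTS h)
  have hmin : ∀ T' ⊂ T, (H j).lin ∉ normalSpan H T' := fun T' hT' hT'span =>
    (Finset.card_lt_card hT').not_ge
      (hTmin T' (Finset.mem_filter.2 ⟨Finset.mem_powerset.2 (hT'.1.trans hTS), hT'span⟩))
  have hTind := linearIndepOn_of_minimal_mem_span (f := fun i => (H i).lin) hTspan hmin
  have hx₀' : x₀ ∈ interA H (insert j T) := by
    rw [interA_insert]; exact ⟨hsub hx₀, interA_anti hTS hx₀⟩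
  refine ⟨T, hTS, hjT, ?_, fun R hR =>
    not_circuitProp_of_linearIndepOn (linearIndepOn_of_ssubset_insert hTind hmin hR)⟩
  rw [circuitProp_iff hx₀', normalSpan_insert, span_insert_eq_span hTspan, ← normalSpan,
    finrank_normalSpan_of_linearIndepOn hTind, Finset.card_insert_of_notMem hjT]

theorem IsAffNBC.not_subset_carrier (hS : IsAffNBC H S) {j : Fin m} (hlt : ∀ i ∈ S, i < j) :
    ¬ interA H S ⊆ (H j).carrier := by
  intro hsub
  obtain ⟨x₀, hx₀⟩ := hS.1
  obtain ⟨T, hTS, hjT, hT⟩ := exists_isAffCircuit_insert hx₀ (fun h => (hlt j h).false) hsub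
  have hmax : (insert j T).max' (Finset.insert_nonempty j T) = j := by
    refine le_antisymm (Finset.max'_le _ _ _ fun i hi => ?_) (Finset.le_max' _ _ (by simp))
    rcases Finset.mem_insert.1 hi with rfl | hi
    exacts [le_rfl, (hlt i (hTS hi)).le]
  exact hS.2 _ hT _ (by rw [hmax, Finset.erase_insert hjT]; exact hTS)

theorem IsAffNBC.mono (hT : IsAffNBC H T) (hST : S ⊆ T) : IsAffNBC H S :=
  ⟨hT.1.mono (interA_anti hST), fun C hC hne hsub => hT.2 C hC hne (hsub.trans hST)⟩

theorem IsAffCircuit.interA_erase_subset (hT : IsAffCircuit H T) {t : Fin m} (ht : t ∈ T) :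
    interA H (T.erase t) ⊆ (H t).carrier := by
  obtain ⟨x₀, hx₀⟩ := hT.1.1
  have hx₀' : x₀ ∈ interA H (T.erase t) := interA_anti (Finset.erase_subset t T) hx₀
  have hrank := (circuitProp_iff hx₀).1 hT.1
  have hrank' := mt (circuitProp_iff hx₀').2 (hT.2 _ (Finset.erase_ssubset ht))
  have hle : finrank ℝ (normalSpan H (T.erase t)) ≤ finrank ℝ (normalSpan H T) :=
    finrank_mono (normalSpan_mono (Finset.erase_subset t T))
  have hle' : finrank ℝ (normalSpan H T) ≤ finrank ℝ (normalSpan H (T.erase t)) + 1 := by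
    have hT' : normalSpan H T = (ℝ ∙ (H t).lin) ⊔ normalSpan H (T.erase t) := by
      conv_lhs => rw [← Finset.insert_erase ht]
      rw [normalSpan_insert, span_insert, normalSpan]
    have hsingle := finrank_span_le_card (R := ℝ) ({(H t).lin} : Set (Dual ℝ (Fin n → ℝ)))
    rw [toFinset_singleton, Finset.card_singleton] at hsingle
    rw [hT']
    exact (finrank_add_le_finrank_add_finrank _ _).trans (by omega)
  have hcard := Finset.card_erase_of_mem ht
  have heq : normalSpan H (T.erase t) = normalSpan H T :=
    eq_of_le_of_finrank_eq (normalSpan_mono (Finset.erase_subset t T)) (by omega)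
  refine (lin_mem_normalSpan_iff hx₀' (mem_interA.1 hx₀ t ht)).1 ?_
  rw [heq]
  exact subset_span ⟨t, ht, rfl⟩

theorem IsAffNBC.insert_of_mem_carrier (hS : IsAffNBC H S) {e : Fin m} {z : Fin n → ℝ}
    (hz : z ∈ interA H S) (hze : z ∈ (H e).carrier) (hzj : ∀ j, e < j → z ∉ (H j).carrier) :
    IsAffNBC H (insert e S) := by
  have hzi : z ∈ interA H (insert e S) := by rw [interA_insert]; exact ⟨hze, hz⟩
  refine ⟨⟨z, hzi⟩, fun T hT hne hsub => ?_⟩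
  by_cases heT : e ∈ T.erase (T.max' hne)
  · have hej : e < T.max' hne := lt_of_le_of_ne (T.le_max' e (Finset.mem_of_mem_erase heT))
      (Finset.ne_of_mem_erase heT)
    exact hzj _ hej (hT.interA_erase_subset (T.max'_mem hne) (interA_anti hsub hzi))
  · exact hS.2 T hT hne fun i hi =>
      (Finset.mem_insert.1 (hsub hi)).resolve_left fun h => heT (h ▸ hi)

end NBC

section Restriction

variable {n m : ℕ} {H : Fin m → Hyp n} {S C : Finset (Fin m)} {k : ℕ}

theorem mem_Ak {i : Fin m} : i ∈ Ak m k ↔ (i : ℕ) < k := by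
  simp [Ak]

theorem Ak_subset_succ : Ak m k ⊆ Ak m (k + 1) := fun _ hi =>
  mem_Ak.2 ((mem_Ak.1 hi).trans (Nat.lt_succ_self k))

theorem restCompl_subset_succ (k : ℕ) (S : Finset (Fin m)) :
    restCompl H k S ⊆ restCompl H (k + 1) S :=
  sdiff_subset_sdiff_right
    (biUnion_subset_biUnion_left fun _ hj => ⟨(Nat.le_succ k).trans hj.1, hj.2⟩)

def interDiffTail (H : Fin m → Hyp n) (k : ℕ) (S : Finset (Fin m)) : Set (Fin n → ℝ) :=
  interA H S \ ⋃ j ∈ {j : Fin m | k ≤ (j : ℕ)}, (H j).carrier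

/-- Since no hyperplane of `𝒜_kᶜ` contains `⋂S`, the restriction `𝒜_kᶜ/S` may as well remove
all of `𝒜_kᶜ`. -/
theorem IsAffNBC.restCompl_eq (hS : IsAffNBC H S) (hSk : S ⊆ Ak m k) :
    restCompl H k S = interDiffTail H k S := by
  refine Subset.antisymm (fun y hy => ⟨hy.1, fun hyU => ?_⟩)
    (sdiff_subset_sdiff_right (biUnion_subset_biUnion_left fun _ hj => hj.1))
  obtain ⟨j, hj, hyj⟩ := mem_iUnion₂.1 hyU
  refine hy.2 (mem_biUnion ⟨hj, ⟨y, hy.1, hyj⟩, fun heq => ?_⟩ hyj)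
  exact hS.not_subset_carrier (fun i hi => Fin.lt_def.2 ((mem_Ak.1 (hSk hi)).trans_le hj))
    (inter_eq_left.1 heq)

theorem interDiffTail_anti (hSC : S ⊆ C) : interDiffTail H k C ⊆ interDiffTail H k S :=
  sdiff_subset_sdiff_left (interA_anti hSC)

theorem interDiffTail_insert (e : Fin m) :
    interDiffTail H k (insert e S) = interDiffTail H k S ∩ (H e).carrier := by
  rw [interDiffTail, interDiffTail, interA_insert, inter_comm, sdiff_inter_right_comm]

theorem interDiffTail_eq_sdiff_carrier (e : Fin m) :
    interDiffTail H e S = interDiffTail H (e + 1) S \ (H e).carrier := by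
  ext y
  simp only [interDiffTail, mem_sdiff, mem_iUnion₂, mem_ofPred_eq, not_exists]
  constructor
  · rintro ⟨hV, h⟩
    exact ⟨⟨hV, fun j hj => h j (by omega)⟩, h e le_rfl⟩
  · rintro ⟨⟨hV, h⟩, he⟩
    refine ⟨hV, fun j hj hyj => ?_⟩
    rcases hj.eq_or_lt with hej | hej
    exacts [he (Fin.ext hej ▸ hyj), h j hej hyj]

theorem convex_connectedComponentIn_interDiffTail (x : Fin n → ℝ) :
    Convex ℝ (connectedComponentIn (interDiffTail H k S) x) := by
  by_cases hx : x ∈ interDiffTail H k S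
  · rw [interDiffTail, connectedComponentIn_diff_eq_signCell (convex_interA H S) hx]
    exact convex_signCell (convex_interA H S) x
  · rw [connectedComponentIn_eq_empty hx]
    exact convex_empty

theorem exists_pos_and_neg_mem_connectedComponentIn {e : Fin m} {z : Fin n → ℝ}
    (hz : z ∈ interDiffTail H k S) (hze : z ∈ (H e).carrier)
    (hS : ¬ interA H S ⊆ (H e).carrier) :
    (∃ x ∈ connectedComponentIn (interDiffTail H k S) z, x ∈ (H e).pos) ∧
      ∃ y ∈ connectedComponentIn (interDiffTail H k S) z, y ∈ (H e).neg := by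
  obtain ⟨w, hw, hwe⟩ := not_subset.1 hS
  rw [Hyp.mem_carrier_iff] at hze hwe
  have hline : ∀ (j : Fin m) (t : ℝ),
      (H j).ev (AffineMap.lineMap z w t) = (H j).ev z + t * ((H j).ev w - (H j).ev z) := by
    intro j t
    rw [AffineMap.apply_lineMap, AffineMap.lineMap_apply_ring']
    ring
  have hnear : ∀ᶠ t in nhds (0 : ℝ), ∀ j ∈ {j : Fin m | k ≤ (j : ℕ)},
      0 < (H j).ev z * (H j).ev (AffineMap.lineMap z w t) := by
    refine (Set.toFinite _).eventually_all.2 fun j hj => ?_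
    have hzj : (H j).ev z ≠ 0 := fun h0 => hz.2 (mem_biUnion hj (Hyp.mem_carrier_iff.2 h0))
    simp only [hline]
    exact (Continuous.tendsto (by fun_prop) 0).eventually
      (lt_mem_nhds (by simpa using mul_self_pos.2 hzj))
  obtain ⟨ε, hε, hball⟩ := Metric.eventually_nhds_iff.1 hnear
  have hcell : ∀ t : ℝ, |t| < ε →
      AffineMap.lineMap z w t ∈ connectedComponentIn (interDiffTail H k S) z := fun t ht => by
    rw [interDiffTail, connectedComponentIn_diff_eq_signCell (convex_interA H S) hz]
    exact ⟨lineMap_mem_interA hz.1 hw t, hball (by simpa using ht)⟩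
  have hε₂ : |ε / 2| < ε := by rw [abs_of_pos (half_pos hε)]; linarith
  have hε₂' : |-(ε / 2)| < ε := by rwa [abs_neg]
  simp only [Hyp.mem_pos_iff, Hyp.mem_neg_iff]
  rcases Ne.lt_or_gt hwe with hwe | hwe
  · exact ⟨⟨_, hcell _ hε₂', by rw [hline, hze]; nlinarith⟩,
      ⟨_, hcell _ hε₂, by rw [hline, hze]; nlinarith⟩⟩
  · exact ⟨⟨_, hcell _ hε₂, by rw [hline, hze]; nlinarith⟩,
      ⟨_, hcell _ hε₂', by rw [hline, hze]; nlinarith⟩⟩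

end Restriction

theorem connectedComponentIn_inter_of_convex {E : Type*} [TopologicalSpace E] [AddCommGroup E]
    [Module ℝ E] [IsTopologicalAddGroup E] [ContinuousSMul ℝ E] {U C : Set E} {z : E}
    (hU : Convex ℝ (connectedComponentIn U z)) (hC : Convex ℝ C) (hz : z ∈ U ∩ C) :
    connectedComponentIn (U ∩ C) z = connectedComponentIn U z ∩ C :=
  Subset.antisymm
    (subset_inter (connectedComponentIn_mono z inter_subset_left)
      ((connectedComponentIn_subset _ _).trans inter_subset_right))
    ((hU.inter hC).isPreconnected.subset_connectedComponentIn
      ⟨mem_connectedComponentIn hz.1, hz.2⟩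
      (inter_subset_inter_left C (connectedComponentIn_subset U z)))

section Regions

variable {n : ℕ} {U U' : Set (Fin n → ℝ)}

theorem compIn_connectedComponentIn (hUU : U' ⊆ U) {x : Fin n → ℝ} (hx : x ∈ U') :
    compIn U (connectedComponentIn U' x) = connectedComponentIn U x :=
  Subset.antisymm
    (iUnion₂_subset fun _ hy => (connectedComponentIn_eq (connectedComponentIn_mono x hUU hy)).ge)
    (subset_biUnion_of_mem (u := connectedComponentIn U) (mem_connectedComponentIn hx))

theorem IsRegionIn.nonempty {Δ : Set (Fin n → ℝ)} (hΔ : IsRegionIn U Δ) : Δ.Nonempty := by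
  obtain ⟨x, hx, rfl⟩ := hΔ
  exact ⟨x, mem_connectedComponentIn hx⟩

theorem IsRegionIn.existsUnique_superset (hUU : U' ⊆ U) {Δ : Set (Fin n → ℝ)}
    (hΔ : IsRegionIn U' Δ) :
    (∃! D, IsRegionIn U D ∧ Δ ⊆ D) ∧ IsRegionIn U (compIn U Δ) ∧ Δ ⊆ compIn U Δ := by
  obtain ⟨x, hx, rfl⟩ := hΔ
  rw [compIn_connectedComponentIn hUU hx]
  have hsub := connectedComponentIn_mono x hUU
  refine ⟨⟨_, ⟨⟨x, hUU hx, rfl⟩, hsub⟩, ?_⟩, ⟨x, hUU hx, rfl⟩, hsub⟩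
  rintro D ⟨⟨y, -, rfl⟩, hD⟩
  exact connectedComponentIn_eq (hD (mem_connectedComponentIn hx))

end Regions

section Phi

variable {n m : ℕ} {H : Fin m → Hyp n} {e : Fin m} {S : Finset (Fin m)} {x : Fin n → ℝ}

theorem mem_BFam {k : ℕ} {Δ : Set (Fin n → ℝ)} :
    (S, Δ) ∈ BFam H k ↔ S ⊆ Ak m k ∧ IsAffNBC H S ∧ IsRegionIn (restCompl H k S) Δ :=
  Iff.rfl

theorem notMem_of_subset_Ak (hS : S ⊆ Ak m e) : e ∉ S := fun h =>
  lt_irrefl _ (mem_Ak.1 (hS h))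

theorem subset_Ak_of_subset_Ak_succ {C : Finset (Fin m)} (hC : C ⊆ Ak m ((e : ℕ) + 1))
    (heC : e ∉ C) : C ⊆ Ak m e := fun _ hi =>
  mem_Ak.2 (lt_of_le_of_ne (Nat.lt_succ_iff.1 (mem_Ak.1 (hC hi))) fun h => heC (Fin.ext h ▸ hi))

theorem insert_subset_Ak_succ (hS : S ⊆ Ak m e) : insert e S ⊆ Ak m ((e : ℕ) + 1) :=
  Finset.insert_subset (mem_Ak.2 (Nat.lt_succ_self _)) (hS.trans Ak_subset_succ)

theorem restCompl_eq_sdiff_carrier (hS : S ⊆ Ak m e) (hnbc : IsAffNBC H S) :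
    restCompl H e S = restCompl H ((e : ℕ) + 1) S \ (H e).carrier := by
  rw [hnbc.restCompl_eq hS, hnbc.restCompl_eq (hS.trans Ak_subset_succ),
    interDiffTail_eq_sdiff_carrier]

theorem disjoint_connectedComponentIn_restCompl_carrier (hS : S ⊆ Ak m e)
    (hnbc : IsAffNBC H S) (x : Fin n → ℝ) :
    Disjoint (connectedComponentIn (restCompl H e S) x) (H e).carrier := by
  rw [restCompl_eq_sdiff_carrier hS hnbc]
  exact disjoint_sdiff_left.mono_left (connectedComponentIn_subset _ _)

theorem connectedComponentIn_restCompl_eq_inter (hS : S ⊆ Ak m e) (hnbc : IsAffNBC H S)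
    (hx : x ∈ restCompl H e S) {σ : Set (Fin n → ℝ)} (hσ : Convex ℝ σ)
    (hσe : Disjoint σ (H e).carrier) (hxσ : connectedComponentIn (restCompl H e S) x ⊆ σ) :
    connectedComponentIn (restCompl H e S) x =
      connectedComponentIn (restCompl H ((e : ℕ) + 1) S) x ∩ σ := by
  refine Subset.antisymm (subset_inter (connectedComponentIn_mono x
    (restCompl_subset_succ _ S)) hxσ) ?_
  have hconv : Convex ℝ (connectedComponentIn (restCompl H ((e : ℕ) + 1) S) x) := by
    rw [hnbc.restCompl_eq (hS.trans Ak_subset_succ)]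
    exact convex_connectedComponentIn_interDiffTail x
  refine (hconv.inter hσ).isPreconnected.subset_connectedComponentIn
    ⟨mem_connectedComponentIn (restCompl_subset_succ _ S hx),
      hxσ (mem_connectedComponentIn hx)⟩ ?_
  rw [restCompl_eq_sdiff_carrier hS hnbc]
  exact fun y hy => ⟨connectedComponentIn_subset _ _ hy.1, disjoint_left.1 hσe hy.2⟩

open scoped Classical in
theorem phi_apply (hS : S ⊆ Ak m e) (hnbc : IsAffNBC H S) (hx : x ∈ restCompl H e S) :
    phi H ((e : ℕ) + 1) e (S, connectedComponentIn (restCompl H e S) x) =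
      if connectedComponentIn (restCompl H e S) x ⊆ (H e).pos ∧
          connectedComponentIn (restCompl H e S) x ≠
            connectedComponentIn (restCompl H ((e : ℕ) + 1) S) x then
        (insert e S, connectedComponentIn (restCompl H ((e : ℕ) + 1) S) x ∩ (H e).carrier)
      else (S, connectedComponentIn (restCompl H ((e : ℕ) + 1) S) x) := by
  have hside := isPreconnected_connectedComponentIn.subset_pos_or_subset_neg
    (disjoint_connectedComponentIn_restCompl_carrier hS hnbc x)
  simp only [phi, compIn_connectedComponentIn (restCompl_subset_succ _ S) hx]
  split_ifs with hA hB hN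
  · rfl
  · exact Prod.ext rfl hB.2
  · rfl
  · exact absurd (hside.resolve_right hN) fun hpos => hB ⟨hpos, not_not.1 fun hne => hA ⟨hpos, hne⟩⟩

theorem exists_mem_carrier_of_ne (hS : S ⊆ Ak m e) (hnbc : IsAffNBC H S)
    (hx : x ∈ restCompl H e S) (hpos : connectedComponentIn (restCompl H e S) x ⊆ (H e).pos)
    (hne : connectedComponentIn (restCompl H e S) x ≠
      connectedComponentIn (restCompl H ((e : ℕ) + 1) S) x) :
    ∃ z ∈ connectedComponentIn (restCompl H ((e : ℕ) + 1) S) x, z ∈ (H e).carrier := by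
  have heq := connectedComponentIn_restCompl_eq_inter hS hnbc hx (H e).convex_pos
    (H e).disjoint_pos_carrier hpos
  obtain ⟨y, hy, hyΔ⟩ := not_subset.1 fun h => hne (Subset.antisymm
    (connectedComponentIn_mono x (restCompl_subset_succ _ S)) h)
  have hy0 : (H e).ev y ≤ 0 := not_lt.1 fun h => hyΔ (heq ▸ ⟨hy, Hyp.mem_pos_iff.2 h⟩)
  have hx0 : 0 < (H e).ev x := Hyp.mem_pos_iff.1 (hpos (mem_connectedComponentIn hx))
  obtain ⟨z, hz, hz0⟩ := isPreconnected_connectedComponentIn.intermediate_value hy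
    (mem_connectedComponentIn (restCompl_subset_succ _ S hx))
    (H e).continuous_ev.continuousOn ⟨hy0, hx0.le⟩
  exact ⟨z, hz, Hyp.mem_carrier_iff.2 hz0⟩

theorem IsAffNBC.insert_of_mem_restCompl (hnbc : IsAffNBC H S) (hS : S ⊆ Ak m e)
    {z : Fin n → ℝ} (hz : z ∈ restCompl H ((e : ℕ) + 1) S) (hze : z ∈ (H e).carrier) :
    IsAffNBC H (insert e S) := by
  rw [hnbc.restCompl_eq (hS.trans Ak_subset_succ)] at hz
  exact hnbc.insert_of_mem_carrier hz.1 hze fun j hej hzj =>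
    hz.2 (mem_biUnion (show (e : ℕ) + 1 ≤ j from Fin.lt_def.1 hej) hzj)

theorem restCompl_succ_insert (hS : S ⊆ Ak m e) (hnbc : IsAffNBC H S)
    (hins : IsAffNBC H (insert e S)) :
    restCompl H ((e : ℕ) + 1) (insert e S) = restCompl H ((e : ℕ) + 1) S ∩ (H e).carrier := by
  rw [hins.restCompl_eq (insert_subset_Ak_succ hS), interDiffTail_insert,
    hnbc.restCompl_eq (hS.trans Ak_subset_succ)]

theorem connectedComponentIn_restCompl_insert (hS : S ⊆ Ak m e) (hnbc : IsAffNBC H S)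
    (hins : IsAffNBC H (insert e S)) {z : Fin n → ℝ}
    (hz : z ∈ restCompl H ((e : ℕ) + 1) S ∩ (H e).carrier) :
    connectedComponentIn (restCompl H ((e : ℕ) + 1) (insert e S)) z =
      connectedComponentIn (restCompl H ((e : ℕ) + 1) S) z ∩ (H e).carrier := by
  rw [restCompl_succ_insert hS hnbc hins]
  refine connectedComponentIn_inter_of_convex ?_ (H e).convex_carrier hz
  rw [hnbc.restCompl_eq (hS.trans Ak_subset_succ)]
  exact convex_connectedComponentIn_interDiffTail z

variable (H e)

theorem mapsTo_phi : MapsTo (phi H ((e : ℕ) + 1) e) (BFam H e) (BFam H ((e : ℕ) + 1)) := by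
  rintro ⟨S, Δ⟩ hp
  obtain ⟨hS, hnbc, x, hx, rfl⟩ := mem_BFam.1 hp
  rw [phi_apply hS hnbc hx]
  split_ifs with hA
  · obtain ⟨z, hz, hze⟩ := exists_mem_carrier_of_ne hS hnbc hx hA.1 hA.2
    have hzU := connectedComponentIn_subset _ _ hz
    have hins := hnbc.insert_of_mem_restCompl hS hzU hze
    refine ⟨insert_subset_Ak_succ hS, hins, z, ?_, ?_⟩
    · rw [restCompl_succ_insert hS hnbc hins]
      exact ⟨hzU, hze⟩
    · rw [connectedComponentIn_restCompl_insert hS hnbc hins ⟨hzU, hze⟩,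
        connectedComponentIn_eq hz]
  · exact ⟨hS.trans (Ak_subset_succ), hnbc, x, restCompl_subset_succ _ S hx, rfl⟩

variable {H e}

open scoped Classical in
theorem connectedComponentIn_restCompl_eq_ite (hS : S ⊆ Ak m e) (hnbc : IsAffNBC H S)
    (hx : x ∈ restCompl H e S)
    (hA : ¬ (connectedComponentIn (restCompl H e S) x ⊆ (H e).pos ∧
      connectedComponentIn (restCompl H e S) x ≠
        connectedComponentIn (restCompl H ((e : ℕ) + 1) S) x)) :
    connectedComponentIn (restCompl H e S) x =
      if (connectedComponentIn (restCompl H ((e : ℕ) + 1) S) x ∩ (H e).neg).Nonempty then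
        connectedComponentIn (restCompl H ((e : ℕ) + 1) S) x ∩ (H e).neg
      else connectedComponentIn (restCompl H ((e : ℕ) + 1) S) x := by
  rcases isPreconnected_connectedComponentIn.subset_pos_or_subset_neg
    (disjoint_connectedComponentIn_restCompl_carrier hS hnbc x) with hpos | hneg
  · have hΓ := not_not.1 fun hne => hA ⟨hpos, hne⟩
    rw [if_neg, hΓ]
    rintro ⟨y, hy, hyneg⟩
    exact (H e).disjoint_pos_neg.notMem_of_mem_left (hpos (hΓ ▸ hy)) hyneg
  · have heq := connectedComponentIn_restCompl_eq_inter hS hnbc hx (H e).convex_neg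
      (H e).disjoint_neg_carrier hneg
    rw [if_pos (heq ▸ ⟨x, mem_connectedComponentIn hx⟩), ← heq]

variable (H e)

theorem injOn_phi : InjOn (phi H ((e : ℕ) + 1) e) (BFam H e) := by
  rintro ⟨S₁, Δ₁⟩ hp₁ ⟨S₂, Δ₂⟩ hp₂ heq
  have hne₁ := (mapsTo_phi H e hp₁).2.2.nonempty
  obtain ⟨hS₁, hnbc₁, x₁, hx₁, rfl⟩ := mem_BFam.1 hp₁
  obtain ⟨hS₂, hnbc₂, x₂, hx₂, rfl⟩ := mem_BFam.1 hp₂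
  rw [phi_apply hS₁ hnbc₁ hx₁] at heq hne₁
  rw [phi_apply hS₂ hnbc₂ hx₂] at heq
  split_ifs at heq hne₁ with hA₁ hA₂ hA₂ <;> obtain ⟨hS, hΓ⟩ := Prod.ext_iff.1 heq <;>
    dsimp only at hS hΓ hne₁
  · obtain rfl : S₁ = S₂ := by
      rw [← Finset.erase_insert (notMem_of_subset_Ak hS₁), hS,
        Finset.erase_insert (notMem_of_subset_Ak hS₂)]
    obtain ⟨z, hz₁, hze⟩ := hne₁
    have hz₂ : z ∈ connectedComponentIn (restCompl H ((e : ℕ) + 1) S₁) x₂ :=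
      (hΓ.subset ⟨hz₁, hze⟩).1
    refine Prod.ext rfl ?_
    rw [connectedComponentIn_restCompl_eq_inter hS₁ hnbc₁ hx₁ (H e).convex_pos
        (H e).disjoint_pos_carrier hA₁.1,
      connectedComponentIn_restCompl_eq_inter hS₁ hnbc₂ hx₂ (H e).convex_pos
        (H e).disjoint_pos_carrier hA₂.1,
      connectedComponentIn_eq hz₁, connectedComponentIn_eq hz₂]
  · exact absurd (hS ▸ Finset.mem_insert_self e S₁) (notMem_of_subset_Ak hS₂)
  · exact absurd (hS.symm ▸ Finset.mem_insert_self e S₂) (notMem_of_subset_Ak hS₁)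
  · subst hS
    refine Prod.ext rfl ?_
    rw [connectedComponentIn_restCompl_eq_ite hS₁ hnbc₁ hx₁ hA₁,
      connectedComponentIn_restCompl_eq_ite hS₁ hnbc₂ hx₂ hA₂, hΓ]

variable {H e}

theorem mem_image_phi_of_mem {C : Finset (Fin m)} (hC : C ⊆ Ak m ((e : ℕ) + 1))
    (hnbcC : IsAffNBC H C) {z : Fin n → ℝ} (hz : z ∈ restCompl H ((e : ℕ) + 1) C)
    (heC : e ∈ C) :
    (C, connectedComponentIn (restCompl H ((e : ℕ) + 1) C) z) ∈
      phi H ((e : ℕ) + 1) e '' BFam H e := by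
  set S := C.erase e
  have hCS : insert e S = C := Finset.insert_erase heC
  have hS : S ⊆ Ak m e :=
    subset_Ak_of_subset_Ak_succ ((Finset.erase_subset e C).trans hC) (Finset.notMem_erase e C)
  have hnbc : IsAffNBC H S := hnbcC.mono (Finset.erase_subset e C)
  have hze : z ∈ (H e).carrier := mem_interA.1 hz.1 e heC
  rw [hnbcC.restCompl_eq hC] at hz
  have hzS : z ∈ interDiffTail H ((e : ℕ) + 1) S := interDiffTail_anti (Finset.erase_subset e C) hz
  obtain ⟨⟨x, hxz, hxpos⟩, -⟩ := exists_pos_and_neg_mem_connectedComponentIn hzS hze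
    (hnbc.not_subset_carrier fun i hi => Fin.lt_def.2 (mem_Ak.1 (hS hi)))
  rw [← hnbc.restCompl_eq (hS.trans Ak_subset_succ)] at hzS hxz
  have hxU : x ∈ restCompl H e S := by
    rw [restCompl_eq_sdiff_carrier hS hnbc]
    exact ⟨connectedComponentIn_subset _ _ hxz, (H e).disjoint_pos_carrier.notMem_of_mem_left hxpos⟩
  have hdisj := disjoint_connectedComponentIn_restCompl_carrier hS hnbc x
  have hΓ := connectedComponentIn_eq hxz
  have hne : connectedComponentIn (restCompl H e S) x ≠
      connectedComponentIn (restCompl H ((e : ℕ) + 1) S) x := fun h =>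
    hdisj.notMem_of_mem_right hze (h ▸ hΓ ▸ mem_connectedComponentIn hzS)
  refine ⟨(S, connectedComponentIn (restCompl H e S) x), mem_BFam.2 ⟨hS, hnbc, x, hxU, rfl⟩, ?_⟩
  rw [phi_apply hS hnbc hxU, if_pos ⟨isPreconnected_connectedComponentIn.subset_pos hdisj
    (mem_connectedComponentIn hxU) hxpos, hne⟩, ← hΓ,
    ← connectedComponentIn_restCompl_insert hS hnbc (hCS ▸ hnbcC) ⟨hzS, hze⟩, hCS,
    hnbcC.restCompl_eq hC]

theorem mem_image_phi_of_notMem {C : Finset (Fin m)} (hC : C ⊆ Ak m ((e : ℕ) + 1))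
    (hnbcC : IsAffNBC H C) {z : Fin n → ℝ} (hz : z ∈ restCompl H ((e : ℕ) + 1) C)
    (heC : e ∉ C) :
    (C, connectedComponentIn (restCompl H ((e : ℕ) + 1) C) z) ∈
      phi H ((e : ℕ) + 1) e '' BFam H e := by
  have hS : C ⊆ Ak m e := subset_Ak_of_subset_Ak_succ hC heC
  suffices ∃ x ∈ connectedComponentIn (restCompl H ((e : ℕ) + 1) C) z,
      x ∈ restCompl H e C ∧ ¬ (connectedComponentIn (restCompl H e C) x ⊆ (H e).pos ∧
        connectedComponentIn (restCompl H e C) x ≠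
          connectedComponentIn (restCompl H ((e : ℕ) + 1) C) x) by
    obtain ⟨x, hxz, hxU, hA⟩ := this
    refine ⟨(C, connectedComponentIn (restCompl H e C) x),
      mem_BFam.2 ⟨hS, hnbcC, x, hxU, rfl⟩, ?_⟩
    rw [phi_apply hS hnbcC hxU, if_neg hA, ← connectedComponentIn_eq hxz]
  have hU := restCompl_eq_sdiff_carrier hS hnbcC
  by_cases hmeet : ∃ z' ∈ connectedComponentIn (restCompl H ((e : ℕ) + 1) C) z, z' ∈ (H e).carrier
  · obtain ⟨z', hz', hz'e⟩ := hmeet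
    have hz'U := connectedComponentIn_subset _ _ hz'
    rw [hnbcC.restCompl_eq (hS.trans Ak_subset_succ)] at hz' hz'U
    obtain ⟨-, y, hyz', hyneg⟩ := exists_pos_and_neg_mem_connectedComponentIn hz'U hz'e
      (hnbcC.not_subset_carrier fun i hi => Fin.lt_def.2 (mem_Ak.1 (hS hi)))
    rw [← connectedComponentIn_eq hz', ← hnbcC.restCompl_eq (hS.trans Ak_subset_succ)]
      at hyz'
    have hyU : y ∈ restCompl H e C := by
      rw [hU]
      exact ⟨connectedComponentIn_subset _ _ hyz',
        (H e).disjoint_neg_carrier.notMem_of_mem_left hyneg⟩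
    exact ⟨y, hyz', hyU, fun hA => (H e).disjoint_pos_neg.notMem_of_mem_left
      (hA.1 (mem_connectedComponentIn hyU)) hyneg⟩
  · push Not at hmeet
    have hsub : connectedComponentIn (restCompl H ((e : ℕ) + 1) C) z ⊆ restCompl H e C := by
      rw [hU]
      exact fun y hy => ⟨connectedComponentIn_subset _ _ hy, hmeet y hy⟩
    have hzU := hsub (mem_connectedComponentIn hz)
    exact ⟨z, mem_connectedComponentIn hz, hzU, fun hA => hA.2 (Subset.antisymm
      (connectedComponentIn_mono z (restCompl_subset_succ _ C))
      (isPreconnected_connectedComponentIn.subset_connectedComponentIn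
        (mem_connectedComponentIn hz) hsub))⟩

variable (H e)

theorem surjOn_phi : SurjOn (phi H ((e : ℕ) + 1) e) (BFam H e) (BFam H ((e : ℕ) + 1)) := by
  rintro ⟨C, Γ⟩ hq
  obtain ⟨hC, hnbcC, z, hz, rfl⟩ := mem_BFam.1 hq
  by_cases heC : e ∈ C
  exacts [mem_image_phi_of_mem hC hnbcC hz heC, mem_image_phi_of_notMem hC hnbcC hz heC]

theorem subset_pos_or_subset_neg_of_mem_BFam {p : Finset (Fin m) × Set (Fin n → ℝ)}
    (hp : p ∈ BFam H e) :
    (p.2 ⊆ (H e).pos ∨ p.2 ⊆ (H e).neg) ∧ ¬ (p.2 ⊆ (H e).pos ∧ p.2 ⊆ (H e).neg) := by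
  obtain ⟨hS, hnbc, x, hx, hΔ⟩ := hp
  rw [hΔ]
  refine ⟨isPreconnected_connectedComponentIn.subset_pos_or_subset_neg
    (disjoint_connectedComponentIn_restCompl_carrier hS hnbc x), fun h =>
      (H e).disjoint_pos_neg.notMem_of_mem_left (h.1 (mem_connectedComponentIn hx))
        (h.2 (mem_connectedComponentIn hx))⟩

end Phi

/-- **Well-definedness and bijectivity of `φ_k`**: every `(ℬ, Δ) ∈ ℬ_{k−1}` is contained
in a unique region `Δ′` of `𝒜_kᶜ/ℬ` (namely `compIn (restCompl H k ℬ) Δ`), satisfies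
exactly one of the three conditions in the definition of `φ_k`, and `φ_k` is a bijection
from `ℬ_{k−1}` onto `ℬ_k`. -/
theorem stmt_13 (n m : ℕ) (H : Fin m → Hyp n)
    (k : ℕ) (hk1 : 1 ≤ k) (hkm : k ≤ m) :
    (∀ p ∈ BFam H (k - 1),
      ((∃! D, IsRegionIn (restCompl H k p.1) D ∧ p.2 ⊆ D) ∧
        IsRegionIn (restCompl H k p.1) (compIn (restCompl H k p.1) p.2) ∧
        p.2 ⊆ compIn (restCompl H k p.1) p.2) ∧
      (((p.2 ⊆ (H ⟨k - 1, by omega⟩).pos ∧ p.2 ≠ compIn (restCompl H k p.1) p.2) ∨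
        (p.2 ⊆ (H ⟨k - 1, by omega⟩).pos ∧ p.2 = compIn (restCompl H k p.1) p.2) ∨
        p.2 ⊆ (H ⟨k - 1, by omega⟩).neg) ∧
       ¬((p.2 ⊆ (H ⟨k - 1, by omega⟩).pos ∧ p.2 ≠ compIn (restCompl H k p.1) p.2) ∧
         (p.2 ⊆ (H ⟨k - 1, by omega⟩).pos ∧ p.2 = compIn (restCompl H k p.1) p.2)) ∧
       ¬((p.2 ⊆ (H ⟨k - 1, by omega⟩).pos ∧ p.2 ≠ compIn (restCompl H k p.1) p.2) ∧
         p.2 ⊆ (H ⟨k - 1, by omega⟩).neg) ∧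
       ¬((p.2 ⊆ (H ⟨k - 1, by omega⟩).pos ∧ p.2 = compIn (restCompl H k p.1) p.2) ∧
         p.2 ⊆ (H ⟨k - 1, by omega⟩).neg))) ∧
    Set.BijOn (phi H k ⟨k - 1, by omega⟩) (BFam H (k - 1)) (BFam H k) := by
  obtain ⟨e, rfl⟩ : ∃ e : Fin m, k = e + 1 := ⟨⟨k - 1, by omega⟩, by simp; omega⟩
  simp only [Nat.add_sub_cancel, Fin.eta]
  refine ⟨fun p hp => ⟨hp.2.2.existsUnique_superset (restCompl_subset_succ _ p.1), ?_⟩,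
    mapsTo_phi H e, injOn_phi H e, surjOn_phi H e⟩
  have := subset_pos_or_subset_neg_of_mem_BFam H e hp
  tauto
end
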